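/- arXiv:2009.09426 — 7 statements merged into one kernel-verified Lean document; each statement's English description precedes it below -/
import Mathlib

section
/- Let H be a bigraph (a graph with a designated bipartition (V1(H), V2(H))) and let ε>0. Then there exists δ>0 with the following property: for every bigraph G that does not bicontain H (i.e., contains no induced sub-bigraph isomorphic to H respecting the bipartition) and has V1(G), V2(G) nonempty, there exist A1 ⊆ V1(G) and A2 ⊆ V2(G) with |Ai| ≥ δ|Vi(G)| for i=1,2, such that either every vertex of A1 has fewer than ε|A2| neighbours in A2 and every vertex of A2 has fewer than ε|A1| neighbours in A1, or every vertex of A1 has more than (1−ε)|A2| neighbours in A2 and every vertex of A2 has more than (1−ε)|A1| neighbours in A1. -/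
/-- A *bigraph*: a graph with a designated bipartition `(V1, V2)`;
adjacency `adj x y` is interpreted for `x ∈ V1`, `y ∈ V2`. -/
structure Bigraph where
  V1 : Finset ℕ
  V2 : Finset ℕ
  disj : Disjoint V1 V2
  adj : ℕ → ℕ → Bool

namespace Bigraph

/-- `G` bicontains `H`: an injective, side- and (non-)adjacency-preserving embedding. -/
def Bicontains (G H : Bigraph) : Prop :=
  ∃ f : ℕ → ℕ, Set.InjOn f ↑(H.V1 ∪ H.V2) ∧
    (∀ u ∈ H.V1, f u ∈ G.V1) ∧ (∀ v ∈ H.V2, f v ∈ G.V2) ∧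
    ∀ u ∈ H.V1, ∀ v ∈ H.V2, H.adj u v = G.adj (f u) (f v)

/-- Number of neighbours of a `V1`-vertex `x` inside `Y ⊆ V2`. -/
def deg1 (G : Bigraph) (x : ℕ) (Y : Finset ℕ) : ℕ :=
  (Y.filter fun y => G.adj x y = true).card

/-- Number of neighbours of a `V2`-vertex `y` inside `X ⊆ V1`. -/
def deg2 (G : Bigraph) (y : ℕ) (X : Finset ℕ) : ℕ :=
  (X.filter fun x => G.adj x y = true).card

/-- Number of edges between `X ⊆ V1` and `Y ⊆ V2`. -/
def edgeCount (G : Bigraph) (X Y : Finset ℕ) : ℕ :=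
  ∑ x ∈ X, (Y.filter fun y => G.adj x y = true).card

/-- `Z1 ⊆ V1`, `Z2 ⊆ V2` are anticomplete: no edges between them. -/
def Anticomplete (G : Bigraph) (Z1 Z2 : Finset ℕ) : Prop :=
  ∀ x ∈ Z1, ∀ y ∈ Z2, G.adj x y = false

/-- `Z1 ⊆ V1`, `Z2 ⊆ V2` are complete to each other. -/
def Complete (G : Bigraph) (Z1 Z2 : Finset ℕ) : Prop :=
  ∀ x ∈ Z1, ∀ y ∈ Z2, G.adj x y = true

/-- The underlying simple graph of a bigraph. -/
def underlying (G : Bigraph) : SimpleGraph ℕ where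
  Adj x y := (x ∈ G.V1 ∧ y ∈ G.V2 ∧ G.adj x y = true) ∨
             (y ∈ G.V1 ∧ x ∈ G.V2 ∧ G.adj y x = true)
  symm := ⟨fun x y h => by tauto⟩
  loopless := ⟨fun x h => by
    rcases h with ⟨h1, h2, _⟩ | ⟨h1, h2, _⟩ <;>
      exact (Finset.disjoint_left.mp G.disj h1) h2⟩

/-- A forest bigraph: the underlying graph is acyclic. -/
def IsForest (G : Bigraph) : Prop := G.underlying.IsAcyclic

/-- `G` is `ε`-coherent. -/
def Coherent (G : Bigraph) (ε : ℝ) : Prop :=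
  (∀ x ∈ G.V1, (G.deg1 x G.V2 : ℝ) < ε * G.V2.card) ∧
  (∀ y ∈ G.V2, (G.deg2 y G.V1 : ℝ) < ε * G.V1.card) ∧
  ¬ ∃ Z1 Z2 : Finset ℕ, Z1 ⊆ G.V1 ∧ Z2 ⊆ G.V2 ∧
      ε * G.V1.card ≤ (Z1.card : ℝ) ∧ ε * G.V2.card ≤ (Z2.card : ℝ) ∧
      G.Anticomplete Z1 Z2

end Bigraph

/-!
If `G` has no sparse or dense pair of linear size, then for a set `D ⊆ V2(G)` of linear size and
either adjacency value `b`, fewer than `δ |V1(G)|` vertices of `V1(G)` have `b`-neighbourhood in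
`D` of relative size below `ε / 2`: otherwise double counting yields more than half of `D` whose
`b`-degree into those vertices is below `ε`, and these form a homogeneous pair. Hence `H` embeds
greedily: the image `y` of a vertex `w ∈ V1(H)` avoids these bad vertices for all `v ∈ V2(H)`, and
the candidates of each `v` are cut down to those with the right adjacency to `y`, at the cost of a
factor `ε / 2`. If one side of `G` is smaller than a constant, a single vertex together with the
larger of its neighbourhood and non-neighbourhood is already a homogeneous pair.
-/

open Finset

lemma card_filter_eq_true_eq_sub {α : Type*} (s : Finset α) (p : α → Bool) :
    (#(s.filter fun z => p z = true) : ℝ) = #s - #(s.filter fun z => p z = false) := by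
  have h := card_filter_add_card_filter_not (s := s) fun z => p z = true
  simp only [Bool.not_eq_true] at h
  rw [← h]
  push_cast
  ring

lemma one_le_two_div {ε : ℝ} (hε : 0 < ε) (hε2 : ε ≤ 2) : 1 ≤ 2 / ε := by
  rwa [le_div_iff₀ hε, one_mul]

lemma card_lt_two_mul_card_sparse_columns {α β : Type*} (B : Finset α) (D : Finset β)
    (r : α → β → Prop) [∀ a b, Decidable (r a b)] {c : ℝ} (hc : 0 < c) (hB : B.Nonempty)
    (h : ∀ y ∈ B, (#(D.filter (r y)) : ℝ) < c / 2 * #D) :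
    (#D : ℝ) < 2 * #(D.filter fun z => (#(B.filter (r · z)) : ℝ) < c * #B) := by
  set col : β → ℝ := fun z => #(B.filter (r · z))
  have hB0 : (0 : ℝ) < #B := by exact_mod_cast hB.card_pos
  have hcount : ∑ z ∈ D, col z < c / 2 * #D * #B := calc
    ∑ z ∈ D, col z = ∑ y ∈ B, (#(D.filter (r y)) : ℝ) := by
      simp only [col, ← Nat.cast_sum]
      exact_mod_cast (sum_card_bipartiteAbove_eq_sum_card_bipartiteBelow (s := B) (t := D) r).symm
    _ < ∑ _y ∈ B, c / 2 * #D := sum_lt_sum_of_nonempty hB h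
    _ = c / 2 * #D * #B := by rw [sum_const, nsmul_eq_mul]; ring
  have hheavy : #(D.filter fun z => ¬ col z < c * #B) * (c * #B) ≤ ∑ z ∈ D, col z := calc
    _ ≤ ∑ z ∈ D.filter (fun z => ¬ col z < c * #B), col z := by
      rw [← nsmul_eq_mul]
      exact card_nsmul_le_sum _ _ _ fun z hz => not_lt.mp (mem_filter.mp hz).2
    _ ≤ ∑ z ∈ D, col z :=
      sum_le_sum_of_subset_of_nonneg (filter_subset _ _) fun _ _ _ => by positivity
  have hsplit : (#D : ℝ) = #(D.filter fun z => col z < c * #B)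
      + #(D.filter fun z => ¬ col z < c * #B) := by
    exact_mod_cast (card_filter_add_card_filter_not (s := D) fun z => col z < c * #B).symm
  have hheavy_lt : (#(D.filter fun z => ¬ col z < c * #B) : ℝ) < #D / 2 := by
    by_contra hge
    nlinarith [mul_pos hc hB0]
  linarith

namespace Bigraph

def swap (G : Bigraph) : Bigraph := ⟨G.V2, G.V1, G.disj.symm, fun x y => G.adj y x⟩

def IsHomogeneousPair (G : Bigraph) (ε : ℝ) (A1 A2 : Finset ℕ) : Prop :=
  ((∀ x ∈ A1, (G.deg1 x A2 : ℝ) < ε * (A2.card : ℝ)) ∧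
    (∀ y ∈ A2, (G.deg2 y A1 : ℝ) < ε * (A1.card : ℝ))) ∨
  ((∀ x ∈ A1, (1 - ε) * (A2.card : ℝ) < (G.deg1 x A2 : ℝ)) ∧
    (∀ y ∈ A2, (1 - ε) * (A1.card : ℝ) < (G.deg2 y A1 : ℝ)))

def HasLinearHomogeneousPair (G : Bigraph) (ε δ : ℝ) : Prop :=
  ∃ A1 A2 : Finset ℕ, A1 ⊆ G.V1 ∧ A2 ⊆ G.V2 ∧
    δ * (G.V1.card : ℝ) ≤ (A1.card : ℝ) ∧ δ * (G.V2.card : ℝ) ≤ (A2.card : ℝ) ∧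
    G.IsHomogeneousPair ε A1 A2

variable {G : Bigraph} {ε ε' δ : ℝ} {A1 A2 : Finset ℕ}

lemma IsHomogeneousPair.mono (h : G.IsHomogeneousPair ε A1 A2) (hε : ε ≤ ε') :
    G.IsHomogeneousPair ε' A1 A2 := by
  rcases h with ⟨h1, h2⟩ | ⟨h1, h2⟩
  · exact Or.inl ⟨fun x hx => (h1 x hx).trans_le (by gcongr),
      fun y hy => (h2 y hy).trans_le (by gcongr)⟩
  · exact Or.inr ⟨fun x hx => (by gcongr : _ ≤ _).trans_lt (h1 x hx),
      fun y hy => (by gcongr : _ ≤ _).trans_lt (h2 y hy)⟩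

lemma HasLinearHomogeneousPair.mono (h : G.HasLinearHomogeneousPair ε δ) (hε : ε ≤ ε') :
    G.HasLinearHomogeneousPair ε' δ :=
  let ⟨A1, A2, h1, h2, hc1, hc2, hp⟩ := h
  ⟨A1, A2, h1, h2, hc1, hc2, hp.mono hε⟩

lemma IsHomogeneousPair.swap (h : G.IsHomogeneousPair ε A1 A2) :
    G.swap.IsHomogeneousPair ε A2 A1 :=
  h.imp And.symm And.symm

lemma HasLinearHomogeneousPair.of_swap (h : G.swap.HasLinearHomogeneousPair ε δ) :
    G.HasLinearHomogeneousPair ε δ :=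
  let ⟨A2, A1, h2, h1, hc2, hc1, hp⟩ := h
  ⟨A1, A2, h1, h2, hc1, hc2, hp.swap⟩

/-- For `b = false` this is the dense alternative: few non-neighbours on both sides. -/
lemma isHomogeneousPair_of_lt (b : Bool)
    (h1 : ∀ x ∈ A1, (#(A2.filter fun y => G.adj x y = b) : ℝ) < ε * #A2)
    (h2 : ∀ y ∈ A2, (#(A1.filter fun x => G.adj x y = b) : ℝ) < ε * #A1) :
    G.IsHomogeneousPair ε A1 A2 := by
  cases b
  · refine Or.inr ⟨fun x hx => ?_, fun y hy => ?_⟩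
    · have := h1 x hx
      rw [deg1, card_filter_eq_true_eq_sub]
      linarith
    · have := h2 y hy
      rw [deg2, card_filter_eq_true_eq_sub]
      linarith
  · exact Or.inl ⟨h1, h2⟩

lemma exists_isHomogeneousPair_of_rows_lt (hε : 0 < ε) (b : Bool) {B D : Finset ℕ}
    (hB : B.Nonempty) (h : ∀ y ∈ B, (#(D.filter fun z => G.adj y z = b) : ℝ) < ε / 2 * #D) :
    ∃ D' ⊆ D, (#D : ℝ) < 2 * #D' ∧ G.IsHomogeneousPair ε B D' := by
  have hD := card_lt_two_mul_card_sparse_columns B D (fun y z => G.adj y z = b) hε hB h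
  refine ⟨_, filter_subset _ _, hD, isHomogeneousPair_of_lt b (fun x hx => ?_) fun z hz => ?_⟩
  · calc _ ≤ (#(D.filter fun z => G.adj x z = b) : ℝ) := by
          gcongr
          exact filter_subset _ _
      _ < ε / 2 * #D := h x hx
      _ < ε * _ := by nlinarith
  · exact (mem_filter.mp hz).2

lemma card_filter_sparse_rows_le (hε : 0 < ε) (hδ : 0 ≤ δ) (hG : ¬ G.HasLinearHomogeneousPair ε δ)
    (b : Bool) {X D : Finset ℕ} (hX : X ⊆ G.V1) (hD : D ⊆ G.V2) (hDc : 2 * δ * #G.V2 ≤ #D) :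
    (#(X.filter fun y => (#(D.filter fun z => G.adj y z = b) : ℝ) < ε / 2 * #D) : ℝ)
      ≤ δ * #G.V1 := by
  set B := X.filter fun y => (#(D.filter fun z => G.adj y z = b) : ℝ) < ε / 2 * #D
  by_contra! hB
  have hBne : B.Nonempty :=
    card_pos.mp (by exact_mod_cast (by positivity : 0 ≤ δ * #G.V1).trans_lt hB)
  obtain ⟨D', hD', hD'c, hp⟩ :=
    exists_isHomogeneousPair_of_rows_lt hε b hBne fun y hy => (mem_filter.mp hy).2
  exact hG ⟨B, D', (filter_subset _ _).trans hX, hD'.trans hD, hB.le, by linarith, hp⟩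

def eraseV1 (H : Bigraph) (w : ℕ) : Bigraph :=
  ⟨H.V1.erase w, H.V2, disjoint_of_subset_left (erase_subset w H.V1) H.disj, H.adj⟩

def BicontainsWithin (G H : Bigraph) (C : ℕ → Finset ℕ) : Prop :=
  ∃ f : ℕ → ℕ, Set.InjOn f ↑(H.V1 ∪ H.V2) ∧ (∀ a ∈ H.V1 ∪ H.V2, f a ∈ C a) ∧
    ∀ u ∈ H.V1, ∀ v ∈ H.V2, H.adj u v = G.adj (f u) (f v)

variable {H : Bigraph} {C C' : ℕ → Finset ℕ} {w y : ℕ}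

lemma vertices_eraseV1 (hw : w ∈ H.V1) :
    (H.eraseV1 w).V1 ∪ (H.eraseV1 w).V2 = (H.V1 ∪ H.V2).erase w := by
  rw [erase_union_distrib, erase_eq_of_notMem (disjoint_left.mp H.disj hw)]
  rfl

lemma card_vertices_eraseV1 (hw : w ∈ H.V1) :
    #((H.eraseV1 w).V1 ∪ (H.eraseV1 w).V2) + 1 = #(H.V1 ∪ H.V2) := by
  rw [vertices_eraseV1 hw, card_erase_add_one (mem_union_left _ hw)]

lemma bicontainsWithin_of_eq_empty (h : H.V1 ∪ H.V2 = ∅) : G.BicontainsWithin H C := by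
  obtain ⟨h1, -⟩ := union_eq_empty.mp h
  exact ⟨id, by simp [h], by simp [h], by simp [h1]⟩

lemma BicontainsWithin.of_swap (h : G.swap.BicontainsWithin H.swap C) :
    G.BicontainsWithin H C := by
  obtain ⟨f, hinj, hf, hadj⟩ := h
  refine ⟨f, ?_, ?_, fun u hu v hv => hadj v hv u hu⟩
  · rwa [union_comm] at hinj
  · rwa [union_comm] at hf

lemma BicontainsWithin.of_eraseV1 (hw : w ∈ H.V1) (hy : y ∈ C w)
    (hC' : ∀ a ∈ H.V1 ∪ H.V2, a ≠ w → C' a ⊆ (C a).erase y)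
    (hadj : ∀ v ∈ H.V2, ∀ z ∈ C' v, G.adj y z = H.adj w v)
    (h : G.BicontainsWithin (H.eraseV1 w) C') : G.BicontainsWithin H C := by
  obtain ⟨f, hinj, hf, hfadj⟩ := h
  rw [vertices_eraseV1 hw] at hinj hf
  have hmem : ∀ a ∈ H.V1 ∪ H.V2, a ≠ w → f a ∈ (C a).erase y := fun a ha haw =>
    hC' a ha haw (hf a (mem_erase.mpr ⟨haw, ha⟩))
  refine ⟨Function.update f w y, ?_, fun a ha => ?_, fun u hu v hv => ?_⟩
  · rw [← insert_erase (mem_union_left _ hw), coe_insert, Set.injOn_insert (by simp)]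
    refine ⟨hinj.congr fun a ha => (Function.update_of_ne (mem_erase.mp ha).1 _ _).symm, ?_⟩
    rintro ⟨a, ha, hay⟩
    obtain ⟨haw, ha⟩ := mem_erase.mp ha
    rw [Function.update_of_ne haw, Function.update_self] at hay
    exact (mem_erase.mp (hmem a ha haw)).1 hay
  · by_cases haw : a = w
    · subst haw
      rwa [Function.update_self]
    · rw [Function.update_of_ne haw]
      exact mem_of_mem_erase (hmem a ha haw)
  · have hvw : v ≠ w := fun h => disjoint_left.mp H.disj hw (h ▸ hv)
    rw [Function.update_of_ne hvw]
    by_cases huw : u = w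
    · subst huw
      rw [Function.update_self]
      exact (hadj v hv _ (hf v (mem_erase.mpr ⟨hvw, mem_union_right _ hv⟩))).symm
    · rw [Function.update_of_ne huw]
      exact hfadj u (mem_erase.mpr ⟨huw, hu⟩) v hv

/-- Embedding `w ∈ V1(H)` shrinks the candidate sets of `V2(H)` by the factor `ε / 2`, removes
one vertex from the other candidate sets, and the image of `w` must avoid at most `k δ |V1(G)|`
bad vertices; the bound is designed to survive these three losses. -/
def LargeCandidates (G H : Bigraph) (C : ℕ → Finset ℕ) (ε δ : ℝ) (k : ℕ) : Prop :=
  (∀ u ∈ H.V1, C u ⊆ G.V1 ∧ (2 / ε) ^ #H.V2 * (k * (2 * δ * #G.V1 + 1)) ≤ (#(C u) : ℝ)) ∧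
  (∀ v ∈ H.V2, C v ⊆ G.V2 ∧ (2 / ε) ^ #H.V1 * (k * (2 * δ * #G.V2 + 1)) ≤ (#(C v) : ℝ))

/-- The candidate sets left for `H.eraseV1 w` once `w` is mapped to `y`. -/
def narrow (G H : Bigraph) (C : ℕ → Finset ℕ) (w y : ℕ) : ℕ → Finset ℕ := fun a =>
  if a ∈ H.V2 then (C a).filter fun z => G.adj y z = H.adj w a else (C a).erase y

variable {k : ℕ}

lemma LargeCandidates.swap (h : LargeCandidates G H C ε δ k) :
    LargeCandidates G.swap H.swap C ε δ k :=
  ⟨h.2, h.1⟩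

lemma LargeCandidates.exists_good (hε : 0 < ε) (hε2 : ε ≤ 2) (hδ : 0 ≤ δ)
    (hG : ¬ G.HasLinearHomogeneousPair ε δ) (hC : LargeCandidates G H C ε δ (k + 1))
    (hk : #(H.V1 ∪ H.V2) ≤ k + 1) (hw : w ∈ H.V1) :
    ∃ y ∈ C w, ∀ v ∈ H.V2,
      ε / 2 * #(C v) ≤ (#((C v).filter fun z => G.adj y z = H.adj w v) : ℝ) := by
  set bad : ℕ → Finset ℕ := fun v => (C w).filter fun y =>
    (#((C v).filter fun z => G.adj y z = H.adj w v) : ℝ) < ε / 2 * #(C v)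
  have hbad : ∀ v ∈ H.V2, (#(bad v) : ℝ) ≤ δ * #G.V1 := fun v hv => by
    refine card_filter_sparse_rows_le hε hδ hG _ (hC.1 w hw).1 (hC.2 v hv).1 ?_
    have hδN : 0 ≤ δ * #G.V2 := by positivity
    calc 2 * δ * #G.V2 ≤ ((k + 1 : ℕ) : ℝ) * (2 * δ * #G.V2 + 1) := by push_cast; nlinarith
      _ ≤ (2 / ε) ^ #H.V1 * ((k + 1 : ℕ) * (2 * δ * #G.V2 + 1)) :=
        le_mul_of_one_le_left (by positivity) (one_le_pow₀ (one_le_two_div hε hε2))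
      _ ≤ #(C v) := (hC.2 v hv).2
  have hV2 : #H.V2 ≤ k := by
    have := card_union_of_disjoint H.disj
    have := card_pos.mpr ⟨w, hw⟩
    omega
  have hlt : #(H.V2.biUnion bad) < #(C w) := by
    have hδN : 0 ≤ δ * #G.V1 := by positivity
    have : (#(H.V2.biUnion bad) : ℝ) < #(C w) := calc
      _ ≤ ∑ v ∈ H.V2, (#(bad v) : ℝ) := by exact_mod_cast card_biUnion_le
      _ ≤ ∑ _v ∈ H.V2, δ * #G.V1 := sum_le_sum hbad
      _ = #H.V2 * (δ * #G.V1) := by rw [sum_const, nsmul_eq_mul]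
      _ ≤ k * (δ * #G.V1) := by gcongr
      _ < ((k + 1 : ℕ) : ℝ) * (2 * δ * #G.V1 + 1) := by push_cast; nlinarith
      _ ≤ (2 / ε) ^ #H.V2 * ((k + 1 : ℕ) * (2 * δ * #G.V1 + 1)) :=
        le_mul_of_one_le_left (by positivity) (one_le_pow₀ (one_le_two_div hε hε2))
      _ ≤ #(C w) := (hC.1 w hw).2
    exact_mod_cast this
  obtain ⟨y, hy, hybad⟩ := exists_mem_notMem_of_card_lt_card hlt
  exact ⟨y, hy, fun v hv => not_lt.mp fun h =>
    hybad (mem_biUnion.mpr ⟨v, hv, mem_filter.mpr ⟨hy, h⟩⟩)⟩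

lemma LargeCandidates.narrow (hε : 0 < ε) (hε2 : ε ≤ 2) (hδ : 0 ≤ δ)
    (hC : LargeCandidates G H C ε δ (k + 1)) (hw : w ∈ H.V1)
    (hy : ∀ v ∈ H.V2,
      ε / 2 * #(C v) ≤ (#((C v).filter fun z => G.adj y z = H.adj w v) : ℝ)) :
    LargeCandidates G (H.eraseV1 w) (G.narrow H C w y) ε δ k := by
  refine ⟨fun u hu => ?_, fun v hv => ?_⟩
  · have huV1 := mem_of_mem_erase hu
    have hu2 : u ∉ H.V2 := disjoint_left.mp H.disj huV1
    simp only [Bigraph.narrow, if_neg hu2]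
    refine ⟨(erase_subset _ _).trans (hC.1 u huV1).1, ?_⟩
    have h := (hC.1 u huV1).2
    have herase : (#(C u) : ℝ) ≤ #((C u).erase y) + 1 := by
      exact_mod_cast (Nat.sub_le_iff_le_add.mp pred_card_le_card_erase)
    have hp : 1 ≤ (2 / ε) ^ #H.V2 * (2 * δ * #G.V1 + 1) :=
      one_le_mul_of_one_le_of_one_le (one_le_pow₀ (one_le_two_div hε hε2)) (by
        linarith [mul_nonneg hδ (Nat.cast_nonneg (α := ℝ) #G.V1)])
    push_cast at h
    change (2 / ε) ^ #H.V2 * (k * (2 * δ * #G.V1 + 1)) ≤ _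
    nlinarith
  · simp only [Bigraph.narrow, if_pos (show v ∈ H.V2 from hv)]
    refine ⟨(filter_subset _ _).trans (hC.2 v hv).1, ?_⟩
    have hV1 : #H.V1 = #(H.V1.erase w) + 1 := (card_erase_add_one hw).symm
    calc (2 / ε) ^ #(H.V1.erase w) * (k * (2 * δ * #G.V2 + 1))
        ≤ (2 / ε) ^ #(H.V1.erase w) * ((k + 1 : ℕ) * (2 * δ * #G.V2 + 1)) := by
          gcongr
          · linarith [mul_nonneg hδ (Nat.cast_nonneg (α := ℝ) #G.V2)]
      _ = ε / 2 * ((2 / ε) ^ #H.V1 * ((k + 1 : ℕ) * (2 * δ * #G.V2 + 1))) := by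
          rw [hV1, pow_succ]
          field_simp
      _ ≤ ε / 2 * #(C v) := by gcongr; exact (hC.2 v hv).2
      _ ≤ _ := hy v hv

lemma LargeCandidates.bicontainsWithin_of_eraseV1 (hε : 0 < ε) (hε2 : ε ≤ 2) (hδ : 0 ≤ δ)
    (hG : ¬ G.HasLinearHomogeneousPair ε δ) (hC : LargeCandidates G H C ε δ (k + 1))
    (hk : #(H.V1 ∪ H.V2) ≤ k + 1) (hw : w ∈ H.V1)
    (ih : ∀ C', LargeCandidates G (H.eraseV1 w) C' ε δ k → G.BicontainsWithin (H.eraseV1 w) C') :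
    G.BicontainsWithin H C := by
  obtain ⟨y, hy, hgood⟩ := hC.exists_good hε hε2 hδ hG hk hw
  have hyV1 : y ∈ G.V1 := (hC.1 w hw).1 hy
  refine (ih _ (hC.narrow hε hε2 hδ hw hgood)).of_eraseV1 hw hy (fun a ha haw => ?_)
    fun v hv z hz => ?_
  · by_cases ha2 : a ∈ H.V2
    · simp only [Bigraph.narrow, if_pos ha2]
      intro z hz
      have hz := (mem_filter.mp hz).1
      exact mem_erase.mpr ⟨fun h => disjoint_left.mp G.disj hyV1 (h ▸ (hC.2 a ha2).1 hz), hz⟩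
    · simp only [Bigraph.narrow, if_neg ha2, subset_refl]
  · simp only [Bigraph.narrow, if_pos hv] at hz
    exact (mem_filter.mp hz).2

theorem bicontainsWithin_of_largeCandidates (hε : 0 < ε) (hε2 : ε ≤ 2) (hδ : 0 ≤ δ) (k : ℕ) :
    ∀ {G H : Bigraph} {C : ℕ → Finset ℕ}, ¬ G.HasLinearHomogeneousPair ε δ →
      #(H.V1 ∪ H.V2) ≤ k → LargeCandidates G H C ε δ k → G.BicontainsWithin H C := by
  induction k with
  | zero =>
    intro G H C _ hk _
    exact bicontainsWithin_of_eq_empty (card_eq_zero.mp (Nat.le_zero.mp hk))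
  | succ k ih =>
    intro G H C hG hk hC
    rcases H.V1.eq_empty_or_nonempty with h1 | ⟨w, hw⟩
    · rcases H.V2.eq_empty_or_nonempty with h2 | ⟨w, hw⟩
      · exact bicontainsWithin_of_eq_empty (by rw [h1, h2, union_empty])
      · have hk' : #(H.swap.V1 ∪ H.swap.V2) ≤ k + 1 := by rw [union_comm]; exact hk
        refine .of_swap (hC.swap.bicontainsWithin_of_eraseV1 hε hε2 hδ
          (fun h => hG h.of_swap) hk' hw fun C' hC' => ih (fun h => hG h.of_swap) ?_ hC')
        have := card_vertices_eraseV1 (H := H.swap) hw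
        omega
    · refine hC.bicontainsWithin_of_eraseV1 hε hε2 hδ hG hk hw fun C' hC' => ih hG ?_ hC'
      have := card_vertices_eraseV1 hw
      omega

lemma BicontainsWithin.bicontains
    (h : G.BicontainsWithin H fun a => if a ∈ H.V1 then G.V1 else G.V2) : G.Bicontains H := by
  obtain ⟨f, hinj, hf, hadj⟩ := h
  refine ⟨f, hinj, fun u hu => ?_, fun v hv => ?_, hadj⟩
  · simpa only [if_pos hu] using hf u (mem_union_left _ hu)
  · simpa only [if_neg (disjoint_right.mp H.disj hv)] using hf v (mem_union_right _ hv)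

lemma bicontains_of_not_hasLinearHomogeneousPair (hε : 0 < ε) (hε2 : ε ≤ 2) (hδ : 0 ≤ δ)
    (hG : ¬ G.HasLinearHomogeneousPair ε δ)
    (h1 : (2 / ε) ^ #(H.V1 ∪ H.V2) * (#(H.V1 ∪ H.V2) * (2 * δ * #G.V1 + 1)) ≤ (#G.V1 : ℝ))
    (h2 : (2 / ε) ^ #(H.V1 ∪ H.V2) * (#(H.V1 ∪ H.V2) * (2 * δ * #G.V2 + 1)) ≤ (#G.V2 : ℝ)) :
    G.Bicontains H := by
  have hpow : ∀ s ⊆ H.V1 ∪ H.V2, (2 / ε) ^ #s ≤ (2 / ε) ^ #(H.V1 ∪ H.V2) := fun s hs =>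
    pow_le_pow_right₀ (one_le_two_div hε hε2) (card_le_card hs)
  refine (bicontainsWithin_of_largeCandidates hε hε2 hδ _ hG le_rfl ⟨fun u hu => ?_,
    fun v hv => ?_⟩).bicontains
  · simp only [if_pos hu]
    refine ⟨subset_rfl, le_trans ?_ h1⟩
    exact mul_le_mul_of_nonneg_right (hpow _ subset_union_right) (by positivity)
  · simp only [if_neg (disjoint_right.mp H.disj hv)]
    refine ⟨subset_rfl, le_trans ?_ h2⟩
    exact mul_le_mul_of_nonneg_right (hpow _ subset_union_left) (by positivity)

lemma hasLinearHomogeneousPair_of_mul_card_V1_le_one (hε : 0 < ε) (h1 : G.V1.Nonempty)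
    (h2 : G.V2.Nonempty) (hδ1 : δ * #G.V1 ≤ 1) (hδ2 : δ ≤ 1 / 2) :
    G.HasLinearHomogeneousPair ε δ := by
  obtain ⟨x, hx⟩ := h1
  obtain ⟨b, hb⟩ : ∃ b : Bool, (#G.V2 : ℝ) ≤ 2 * #(G.V2.filter fun z => G.adj x z = b) := by
    have := card_filter_eq_true_eq_sub G.V2 (G.adj x)
    by_contra! h
    linarith [h true, h false]
  set A2 := G.V2.filter fun z => G.adj x z = b
  have hV2 : (0 : ℝ) < #G.V2 := by exact_mod_cast h2.card_pos
  refine ⟨{x}, A2, singleton_subset_iff.mpr hx, filter_subset _ _, by simpa using hδ1,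
    by nlinarith, isHomogeneousPair_of_lt (!b) (fun x' hx' => ?_) fun z hz => ?_⟩
  · rw [mem_singleton.mp hx', filter_false_of_mem fun z hz => by simp [(mem_filter.mp hz).2]]
    simp only [card_empty, Nat.cast_zero]
    nlinarith
  · rw [filter_false_of_mem fun x' hx' => by simp [mem_singleton.mp hx', (mem_filter.mp hz).2]]
    simpa using hε

theorem exists_pos_hasLinearHomogeneousPair_of_not_bicontains (H : Bigraph) (hε : 0 < ε)
    (hε2 : ε ≤ 2) :
    ∃ δ : ℝ, 0 < δ ∧ ∀ G : Bigraph, ¬ G.Bicontains H → G.V1.Nonempty → G.V2.Nonempty →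
      G.HasLinearHomogeneousPair ε δ := by
  set n := #(H.V1 ∪ H.V2)
  set M : ℝ := 2 * (2 / ε) ^ n * n with hMdef
  have hM : 0 ≤ M := by positivity
  -- A side with fewer than `M` vertices is matched by a single vertex; on larger sides the
  -- greedy embedding has enough room.
  refine ⟨1 / (2 * M + 2), by positivity, fun G hG h1 h2 => ?_⟩
  have hδ2 : 1 / (2 * M + 2) ≤ 1 / 2 := by gcongr; linarith
  have hsmall : ∀ N : ℕ, (N : ℝ) < M → 1 / (2 * M + 2) * N ≤ 1 := fun N hN => by
    rw [div_mul_eq_mul_div, one_mul, div_le_one (by positivity)]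
    linarith
  have hlarge : ∀ N : ℕ, M ≤ N → (2 / ε) ^ n * (n * (2 * (1 / (2 * M + 2)) * N + 1)) ≤ N :=
    fun N hN => by
      have hδM : M * (1 / (2 * M + 2)) ≤ 1 / 2 := by
        rw [mul_one_div, div_le_iff₀ (by positivity)]
        linarith
      have hsplit : (2 / ε) ^ n * (n * (2 * (1 / (2 * M + 2)) * N + 1))
          = M * (1 / (2 * M + 2)) * N + M / 2 := by
        rw [hMdef]
        ring
      rw [hsplit]
      nlinarith [(Nat.cast_nonneg N : (0 : ℝ) ≤ N)]
  by_cases hs1 : (#G.V1 : ℝ) < M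
  · exact hasLinearHomogeneousPair_of_mul_card_V1_le_one hε h1 h2 (hsmall _ hs1) hδ2
  by_cases hs2 : (#G.V2 : ℝ) < M
  · exact (hasLinearHomogeneousPair_of_mul_card_V1_le_one (G := G.swap) hε h2 h1 (hsmall _ hs2)
      hδ2).of_swap
  by_contra hno
  exact hG (bicontains_of_not_hasLinearHomogeneousPair hε hε2 (by positivity) hno
    (hlarge _ (not_lt.mp hs1)) (hlarge _ (not_lt.mp hs2)))

end Bigraph

/-- For every bigraph `H` and every `ε > 0` there exists `δ > 0` such that every
`H`-free bigraph `G` with both sides nonempty contains linear-sized `A1 ⊆ V1(G)`,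
`A2 ⊆ V2(G)` forming a sparse or a dense pair. -/
theorem stmt0 (H : Bigraph) (ε : ℝ) (hε : 0 < ε) :
    ∃ δ : ℝ, 0 < δ ∧ ∀ G : Bigraph, ¬ G.Bicontains H → G.V1.Nonempty → G.V2.Nonempty →
      ∃ A1 A2 : Finset ℕ, A1 ⊆ G.V1 ∧ A2 ⊆ G.V2 ∧
        δ * (G.V1.card : ℝ) ≤ (A1.card : ℝ) ∧ δ * (G.V2.card : ℝ) ≤ (A2.card : ℝ) ∧
        (((∀ x ∈ A1, (G.deg1 x A2 : ℝ) < ε * (A2.card : ℝ)) ∧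
          (∀ y ∈ A2, (G.deg2 y A1 : ℝ) < ε * (A1.card : ℝ))) ∨
         ((∀ x ∈ A1, (1 - ε) * (A2.card : ℝ) < (G.deg1 x A2 : ℝ)) ∧
          (∀ y ∈ A2, (1 - ε) * (A1.card : ℝ) < (G.deg2 y A1 : ℝ)))) := by
  obtain ⟨δ, hδ, h⟩ := Bigraph.exists_pos_hasLinearHomogeneousPair_of_not_bicontains H
    (lt_min hε two_pos) (min_le_right ε 2)
  exact ⟨δ, hδ, fun G hG h1 h2 => (h G hG h1 h2).mono (min_le_left ε 2)⟩
end

section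
/- For all c, ε, τ > 0 with ε < τ ≤ 8/9 there exists δ > 0 with the following property. Let G be a bigraph with at most (1−τ)|V1(G)|·|V2(G)| edges and with V1(G), V2(G) nonempty. Then there exist Zi ⊆ Vi(G) with |Zi| ≥ δ|Vi(G)| for i = 1,2, such that for all subsets Yi ⊆ Zi with |Yi| ≥ c|Zi| for i = 1,2, the number of edges between Y1 and Y2 is less than (1−ε)|Y1|·|Y2|. -/
/-!
Count non-edges, `ē(A, B) = |A| |B| - e(A, B)`, and fix a small exponent `γ ∈ (0, 1)` depending
on `c, ε, τ`. Let `(Z1, Z2)` maximize `ē(A, B) / (|A| |B|) ^ (1 - γ)` over `A ⊆ V1`, `B ⊆ V2`.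
Comparing with `(V1, V2)` and using `ē ≤ |A| |B|` gives `τ (|V1| |V2|) ^ γ ≤ (|Z1| |Z2|) ^ γ`,
hence `|Zi| ≥ τ ^ (1 / γ) |Vi|`, and also `ē(Z1, Z2) ≥ τ |Z1| |Z2|`. For `Yi ⊆ Zi` of relative
sizes `s, t`, maximality bounds the non-edges of `(Z1 \ Y1, Z2)` and `(Y1, Z2 \ Y2)` by
`ē(Z1, Z2) (1 - s) ^ (1 - γ)` and `ē(Z1, Z2) (s (1 - t)) ^ (1 - γ)`. As `γ → 0` the remaining
non-edges of `(Y1, Y2)` approach `ē(Z1, Z2) s t ≥ τ s t |Z1| |Z2|`, which beats `ε |Y1| |Y2|`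
uniformly in `s, t ≥ c`.
-/

open Filter Topology

theorem add_mul_pos_of_mem_Icc {a b c d t : ℝ} (ht : t ∈ Set.Icc c d)
    (hc : 0 < a + b * c) (hd : 0 < a + b * d) : 0 < a + b * t := by
  rcases le_total 0 b with hb | hb <;> nlinarith [ht.1, ht.2]

theorem exists_rpow_exponent {c ε τ : ℝ} (hc0 : 0 < c) (hε : 0 ≤ ε) (hετ : ε < τ) :
    ∃ γ : ℝ, 0 < γ ∧ γ < 1 ∧ ∀ s t, c ≤ s → s ≤ 1 → c ≤ t → t ≤ 1 →
      ε * s * t < τ * (1 - (1 - s) ^ (1 - γ) - (s * (1 - t)) ^ (1 - γ)) := by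
  -- `s * (g γ t + ε t)` bounds the right-hand side from below; `g` is affine in `t`, with
  -- `g 0 t = (τ - ε) t`.
  set g : ℝ → ℝ → ℝ := fun γ t =>
    τ * ((1 - γ) - c ^ (-γ) * ((1 - γ) * (1 - t) + γ)) - ε * t with hg
  have hev : ∀ t, 0 < t → ∀ᶠ γ in 𝓝[>] 0, 0 < g γ t := fun t ht => by
    have hcont : Continuous fun γ => g γ t := by
      simp only [hg]
      fun_prop (disch := exact hc0.ne')
    refine nhdsWithin_le_nhds <| (hcont.tendsto 0).eventually_const_lt ?_
    simpa [hg] using mul_lt_mul_of_pos_right hετ ht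
  have hsmall : ∀ᶠ γ in 𝓝[>] 0, 0 < γ ∧ γ < 1 ∧ 0 < g γ c ∧ 0 < g γ 1 :=
    eventually_mem_nhdsWithin.and <|
      (eventually_nhdsWithin_of_eventually_nhds (eventually_lt_nhds one_pos)).and <|
        (hev c hc0).and (hev 1 one_pos)
  obtain ⟨γ, hγ0, hγ1, hgc, hg1⟩ := hsmall.exists
  refine ⟨γ, hγ0, hγ1, fun s t hcs hs1 hct ht1 => ?_⟩
  have hs0 : 0 < s := hc0.trans_le hcs
  set K := c ^ (-γ)
  have hgt : 0 < g γ t := by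
    have h := add_mul_pos_of_mem_Icc (a := τ * ((1 - γ) - K)) (b := τ * K * (1 - γ) - ε)
      ⟨hct, ht1⟩ (by simp only [hg] at hgc; linarith) (by simp only [hg] at hg1; linarith)
    simp only [hg]; linarith
  have bernoulli : ∀ x ≤ 1, (1 - x) ^ (1 - γ) ≤ (1 - γ) * (1 - x) + γ := fun x hx => by
    have := rpow_one_add_le_one_add_mul_self (s := -x) (by linarith) (p := 1 - γ)
      (by linarith) (by linarith)
    rw [← sub_eq_add_neg] at this
    linarith
  have hs : s ^ (1 - γ) ≤ K * s := by
    rw [Real.rpow_sub hs0, Real.rpow_one, div_eq_mul_inv, ← Real.rpow_neg hs0.le, mul_comm]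
    exact mul_le_mul_of_nonneg_right (Real.rpow_le_rpow_of_nonpos hc0 hcs (by linarith)) hs0.le
  have hB : (s * (1 - t)) ^ (1 - γ) ≤ K * s * ((1 - γ) * (1 - t) + γ) := by
    rw [Real.mul_rpow hs0.le (by linarith)]
    gcongr
    exact bernoulli t ht1
  have hA := bernoulli s hs1
  have hτ : 0 ≤ τ := hε.trans hετ.le
  calc ε * s * t < s * (g γ t + ε * t) := by nlinarith
    _ = τ * (1 - ((1 - γ) * (1 - s) + γ) - K * s * ((1 - γ) * (1 - t) + γ)) := by
      simp only [hg]; ring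
    _ ≤ τ * (1 - (1 - s) ^ (1 - γ) - (s * (1 - t)) ^ (1 - γ)) := by gcongr

namespace Bigraph

variable (G : Bigraph)

theorem edgeCount_le_card_mul (X Y : Finset ℕ) : G.edgeCount X Y ≤ X.card * Y.card := by
  simpa [edgeCount] using Finset.sum_le_card_nsmul X _ Y.card fun x _ => Finset.card_filter_le Y _

theorem edgeCount_eq_add_sdiff_left {Y Z : Finset ℕ} (h : Y ⊆ Z) (B : Finset ℕ) :
    G.edgeCount Z B = G.edgeCount Y B + G.edgeCount (Z \ Y) B := by
  rw [edgeCount, edgeCount, edgeCount, ← Finset.sum_union Finset.disjoint_sdiff,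
    Finset.union_sdiff_of_subset h]

theorem edgeCount_eq_add_sdiff_right (A : Finset ℕ) {Y Z : Finset ℕ} (h : Y ⊆ Z) :
    G.edgeCount A Z = G.edgeCount A Y + G.edgeCount A (Z \ Y) := by
  rw [edgeCount, edgeCount, edgeCount, ← Finset.sum_add_distrib]
  refine Finset.sum_congr rfl fun x _ => ?_
  rw [← Finset.card_union_of_disjoint (Finset.disjoint_filter_filter Finset.disjoint_sdiff),
    ← Finset.filter_union, Finset.union_sdiff_of_subset h]

noncomputable def nonEdgeCount (A B : Finset ℕ) : ℝ :=
  A.card * B.card - G.edgeCount A B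

theorem nonEdgeCount_nonneg (A B : Finset ℕ) : 0 ≤ G.nonEdgeCount A B := by
  rw [nonEdgeCount, sub_nonneg]
  exact_mod_cast G.edgeCount_le_card_mul A B

theorem nonEdgeCount_le_card_mul (A B : Finset ℕ) :
    G.nonEdgeCount A B ≤ (A.card : ℝ) * B.card := by
  rw [nonEdgeCount]
  linarith [(G.edgeCount A B).cast_nonneg (α := ℝ)]

theorem nonEdgeCount_eq_sub_sub {Y1 Y2 Z1 Z2 : Finset ℕ} (h1 : Y1 ⊆ Z1) (h2 : Y2 ⊆ Z2) :
    G.nonEdgeCount Y1 Y2 =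
      G.nonEdgeCount Z1 Z2 - G.nonEdgeCount (Z1 \ Y1) Z2 - G.nonEdgeCount Y1 (Z2 \ Y2) := by
  have e1 := G.edgeCount_eq_add_sdiff_left h1 Z2
  have e2 := G.edgeCount_eq_add_sdiff_right Y1 h2
  simp only [nonEdgeCount, Finset.card_sdiff_of_subset h1, Finset.card_sdiff_of_subset h2,
    Nat.cast_sub (Finset.card_le_card h1), Nat.cast_sub (Finset.card_le_card h2), e1, e2]
  push_cast
  ring

noncomputable def potential (γ : ℝ) (A B : Finset ℕ) : ℝ :=
  G.nonEdgeCount A B / ((A.card : ℝ) * B.card) ^ (1 - γ)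

theorem nonEdgeCount_eq_zero {A B : Finset ℕ} (h : (A.card : ℝ) * B.card = 0) :
    G.nonEdgeCount A B = 0 :=
  le_antisymm (h ▸ G.nonEdgeCount_le_card_mul A B) (G.nonEdgeCount_nonneg A B)

theorem potential_mul_rpow {γ : ℝ} (hγ : γ < 1) (A B : Finset ℕ) :
    G.potential γ A B * ((A.card : ℝ) * B.card) ^ (1 - γ) = G.nonEdgeCount A B := by
  rcases (by positivity : (0 : ℝ) ≤ A.card * B.card).eq_or_lt with h | h
  · rw [← h, Real.zero_rpow (by linarith), mul_zero, G.nonEdgeCount_eq_zero h.symm]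
  · exact div_mul_cancel₀ _ (Real.rpow_pos_of_pos h _).ne'

theorem potential_le_rpow (γ : ℝ) (A B : Finset ℕ) :
    G.potential γ A B ≤ ((A.card : ℝ) * B.card) ^ γ := by
  rcases (by positivity : (0 : ℝ) ≤ A.card * B.card).eq_or_lt with h | h
  · rw [potential, G.nonEdgeCount_eq_zero h.symm, zero_div]
    positivity
  · calc G.potential γ A B ≤ ((A.card : ℝ) * B.card) / ((A.card : ℝ) * B.card) ^ (1 - γ) :=
          div_le_div_of_nonneg_right (G.nonEdgeCount_le_card_mul A B) (by positivity)
      _ = ((A.card : ℝ) * B.card) ^ γ := by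
          rw [Real.rpow_sub h, Real.rpow_one, div_div_cancel₀ h.ne']

def IsPotentialMax (γ : ℝ) (Z1 Z2 : Finset ℕ) : Prop :=
  Z1 ⊆ G.V1 ∧ Z2 ⊆ G.V2 ∧ ∀ A ⊆ G.V1, ∀ B ⊆ G.V2, G.potential γ A B ≤ G.potential γ Z1 Z2

theorem exists_isPotentialMax (γ : ℝ) : ∃ Z1 Z2, G.IsPotentialMax γ Z1 Z2 := by
  obtain ⟨⟨Z1, Z2⟩, hZ, hmax⟩ := (G.V1.powerset ×ˢ G.V2.powerset).exists_max_image
    (fun p => G.potential γ p.1 p.2) ⟨(∅, ∅), by simp⟩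
  simp only [Finset.mem_product, Finset.mem_powerset] at hZ
  exact ⟨Z1, Z2, hZ.1, hZ.2, fun A hA B hB => hmax (A, B) (by simp [hA, hB])⟩

namespace IsPotentialMax

variable {G} {γ τ : ℝ} {Z1 Z2 : Finset ℕ}

theorem nonEdgeCount_le (h : G.IsPotentialMax γ Z1 Z2) (hγ : γ < 1) {A B : Finset ℕ}
    (hA : A ⊆ G.V1) (hB : B ⊆ G.V2) :
    G.nonEdgeCount A B ≤
      G.nonEdgeCount Z1 Z2 * ((A.card * B.card : ℝ) / (Z1.card * Z2.card)) ^ (1 - γ) :=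
  calc G.nonEdgeCount A B = G.potential γ A B * ((A.card : ℝ) * B.card) ^ (1 - γ) :=
        (G.potential_mul_rpow hγ A B).symm
    _ ≤ G.potential γ Z1 Z2 * ((A.card : ℝ) * B.card) ^ (1 - γ) := by
        gcongr
        exact h.2.2 A hA B hB
    _ = _ := by
        rw [potential, Real.div_rpow (by positivity) (by positivity)]
        ring

theorem mul_rpow_le_potential (h : G.IsPotentialMax γ Z1 Z2) (hV1 : G.V1.Nonempty)
    (hV2 : G.V2.Nonempty) (hdense : τ * G.V1.card * G.V2.card ≤ G.nonEdgeCount G.V1 G.V2) :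
    τ * ((G.V1.card : ℝ) * G.V2.card) ^ γ ≤ G.potential γ Z1 Z2 := by
  have hN : (0 : ℝ) < G.V1.card * G.V2.card := by
    have := hV1.card_pos; have := hV2.card_pos; positivity
  calc τ * ((G.V1.card : ℝ) * G.V2.card) ^ γ
        = τ * G.V1.card * G.V2.card / ((G.V1.card : ℝ) * G.V2.card) ^ (1 - γ) := by
        rw [Real.rpow_sub hN, Real.rpow_one]
        field_simp
    _ ≤ G.potential γ G.V1 G.V2 := by
        rw [potential]
        gcongr
    _ ≤ G.potential γ Z1 Z2 := h.2.2 _ subset_rfl _ subset_rfl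

theorem rpow_mul_card_le (h : G.IsPotentialMax γ Z1 Z2) (hγ : 0 < γ) (hτ : 0 ≤ τ)
    (hV1 : G.V1.Nonempty) (hV2 : G.V2.Nonempty)
    (hdense : τ * G.V1.card * G.V2.card ≤ G.nonEdgeCount G.V1 G.V2) :
    τ ^ (1 / γ) * G.V1.card ≤ Z1.card ∧ τ ^ (1 / γ) * G.V2.card ≤ Z2.card := by
  have hN1 : (0 : ℝ) < G.V1.card := by exact_mod_cast hV1.card_pos
  have hN2 : (0 : ℝ) < G.V2.card := by exact_mod_cast hV2.card_pos
  have hz1 : (Z1.card : ℝ) ≤ G.V1.card := by exact_mod_cast Finset.card_le_card h.1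
  have hz2 : (Z2.card : ℝ) ≤ G.V2.card := by exact_mod_cast Finset.card_le_card h.2.1
  have hprod : τ ^ (1 / γ) * (G.V1.card * G.V2.card) ≤ (Z1.card : ℝ) * Z2.card := by
    rw [← Real.rpow_le_rpow_iff (by positivity) (by positivity) hγ,
      Real.mul_rpow (by positivity) (by positivity), ← Real.rpow_mul hτ,
      one_div_mul_cancel hγ.ne', Real.rpow_one]
    exact (h.mul_rpow_le_potential hV1 hV2 hdense).trans (G.potential_le_rpow γ Z1 Z2)
  constructor
  · refine le_of_mul_le_mul_right ?_ hN2
    nlinarith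
  · refine le_of_mul_le_mul_left ?_ hN1
    nlinarith

theorem mul_card_mul_card_le_nonEdgeCount (h : G.IsPotentialMax γ Z1 Z2) (hγ0 : 0 ≤ γ)
    (hγ1 : γ < 1) (hτ : 0 ≤ τ) (hV1 : G.V1.Nonempty) (hV2 : G.V2.Nonempty)
    (hdense : τ * G.V1.card * G.V2.card ≤ G.nonEdgeCount G.V1 G.V2) :
    τ * Z1.card * Z2.card ≤ G.nonEdgeCount Z1 Z2 := by
  have hZV : (Z1.card : ℝ) * Z2.card ≤ G.V1.card * G.V2.card := by
    exact_mod_cast Nat.mul_le_mul (Finset.card_le_card h.1) (Finset.card_le_card h.2.1)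
  calc τ * Z1.card * Z2.card
        = τ * (((Z1.card : ℝ) * Z2.card) ^ γ * ((Z1.card : ℝ) * Z2.card) ^ (1 - γ)) := by
        rw [← Real.rpow_add' (by positivity) (by norm_num), add_sub_cancel, Real.rpow_one,
          mul_assoc]
    _ ≤ τ * (((G.V1.card : ℝ) * G.V2.card) ^ γ * ((Z1.card : ℝ) * Z2.card) ^ (1 - γ)) := by
        gcongr
    _ ≤ G.potential γ Z1 Z2 * ((Z1.card : ℝ) * Z2.card) ^ (1 - γ) := by
        rw [← mul_assoc]
        gcongr
        exact h.mul_rpow_le_potential hV1 hV2 hdense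
    _ = G.nonEdgeCount Z1 Z2 := G.potential_mul_rpow hγ1 Z1 Z2

theorem mul_le_nonEdgeCount_of_subset (h : G.IsPotentialMax γ Z1 Z2) (hγ : γ < 1)
    {Y1 Y2 : Finset ℕ} (hY1 : Y1 ⊆ Z1) (hY2 : Y2 ⊆ Z2) (hz1 : 0 < (Z1.card : ℝ))
    (hz2 : 0 < (Z2.card : ℝ)) :
    G.nonEdgeCount Z1 Z2 * (1 - (1 - (Y1.card / Z1.card : ℝ)) ^ (1 - γ) -
        ((Y1.card / Z1.card : ℝ) * (1 - Y2.card / Z2.card)) ^ (1 - γ)) ≤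
      G.nonEdgeCount Y1 Y2 := by
  have hA := h.nonEdgeCount_le hγ ((Z1.sdiff_subset (t := Y1)).trans h.1) h.2.1
  have hB := h.nonEdgeCount_le hγ (hY1.trans h.1) ((Z2.sdiff_subset (t := Y2)).trans h.2.1)
  rw [Finset.card_sdiff_of_subset hY1, Nat.cast_sub (Finset.card_le_card hY1)] at hA
  rw [Finset.card_sdiff_of_subset hY2, Nat.cast_sub (Finset.card_le_card hY2)] at hB
  have e1 : ((Z1.card - Y1.card) * Z2.card : ℝ) / (Z1.card * Z2.card) =
      1 - Y1.card / Z1.card := by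
    field_simp
  have e2 : (Y1.card * (Z2.card - Y2.card) : ℝ) / (Z1.card * Z2.card) =
      Y1.card / Z1.card * (1 - Y2.card / Z2.card) := by
    field_simp
  rw [e1] at hA
  rw [e2] at hB
  rw [G.nonEdgeCount_eq_sub_sub hY1 hY2]
  linarith

end IsPotentialMax

end Bigraph

theorem stmt1_general (c ε τ : ℝ) (hc : 0 < c) (hε : 0 < ε) (hετ : ε < τ) :
    ∃ δ : ℝ, 0 < δ ∧ ∀ G : Bigraph,
      (G.edgeCount G.V1 G.V2 : ℝ) ≤ (1 - τ) * (G.V1.card : ℝ) * (G.V2.card : ℝ) →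
      G.V1.Nonempty → G.V2.Nonempty →
      ∃ Z1 Z2 : Finset ℕ, Z1 ⊆ G.V1 ∧ Z2 ⊆ G.V2 ∧
        δ * (G.V1.card : ℝ) ≤ (Z1.card : ℝ) ∧ δ * (G.V2.card : ℝ) ≤ (Z2.card : ℝ) ∧
        ∀ Y1 Y2 : Finset ℕ, Y1 ⊆ Z1 → Y2 ⊆ Z2 →
          c * (Z1.card : ℝ) ≤ (Y1.card : ℝ) → c * (Z2.card : ℝ) ≤ (Y2.card : ℝ) →
          (G.edgeCount Y1 Y2 : ℝ) < (1 - ε) * (Y1.card : ℝ) * (Y2.card : ℝ) := by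
  have hτ : 0 < τ := hε.trans hετ
  obtain ⟨γ, hγ0, hγ1, hγ⟩ := exists_rpow_exponent hc hε.le hετ
  refine ⟨τ ^ (1 / γ), by positivity, fun G hG hV1 hV2 => ?_⟩
  have hdense : τ * G.V1.card * G.V2.card ≤ G.nonEdgeCount G.V1 G.V2 := by
    rw [Bigraph.nonEdgeCount]; linarith
  obtain ⟨Z1, Z2, hZ⟩ := G.exists_isPotentialMax γ
  obtain ⟨hZ1, hZ2⟩ := hZ.rpow_mul_card_le hγ0 hτ.le hV1 hV2 hdense
  refine ⟨Z1, Z2, hZ.1, hZ.2.1, hZ1, hZ2, fun Y1 Y2 hY1 hY2 hcY1 hcY2 => ?_⟩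
  have hz1 : 0 < (Z1.card : ℝ) := lt_of_lt_of_le (by have := hV1.card_pos; positivity) hZ1
  have hz2 : 0 < (Z2.card : ℝ) := lt_of_lt_of_le (by have := hV2.card_pos; positivity) hZ2
  set s : ℝ := Y1.card / Z1.card with hs
  set t : ℝ := Y2.card / Z2.card with ht
  set F := 1 - (1 - s) ^ (1 - γ) - (s * (1 - t)) ^ (1 - γ)
  have hs1 : s ≤ 1 := div_le_one_of_le₀ (by exact_mod_cast Finset.card_le_card hY1) hz1.le
  have ht1 : t ≤ 1 := div_le_one_of_le₀ (by exact_mod_cast Finset.card_le_card hY2) hz2.le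
  have hF := hγ s t ((le_div_iff₀ hz1).2 hcY1) hs1 ((le_div_iff₀ hz2).2 hcY2) ht1
  have hF0 : 0 < F := pos_of_mul_pos_right (hF.trans_le' (by positivity)) hτ.le
  suffices ε * Y1.card * Y2.card < G.nonEdgeCount Y1 Y2 by
    rw [Bigraph.nonEdgeCount] at this; linarith
  calc ε * Y1.card * Y2.card = ε * s * t * (Z1.card * Z2.card) := by
        rw [hs, ht]; field_simp
    _ < τ * F * (Z1.card * Z2.card) := by gcongr
    _ = τ * Z1.card * Z2.card * F := by ring
    _ ≤ G.nonEdgeCount Z1 Z2 * F := by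
        gcongr
        exact hZ.mul_card_mul_card_le_nonEdgeCount hγ0.le hγ1 hτ.le hV1 hV2 hdense
    _ ≤ G.nonEdgeCount Y1 Y2 := hZ.mul_le_nonEdgeCount_of_subset hγ1 hY1 hY2 hz1 hz2

/-- Theorem 2.3 of the paper: in a bigraph that is not too dense one can find
linear-sized `Z1, Z2` such that all linear-sized subsets of them are not too dense. -/
theorem stmt1 (c ε τ : ℝ) (hc : 0 < c) (hε : 0 < ε) (hετ : ε < τ) (hτ : τ ≤ 8 / 9) :
    ∃ δ : ℝ, 0 < δ ∧ ∀ G : Bigraph,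
      (G.edgeCount G.V1 G.V2 : ℝ) ≤ (1 - τ) * (G.V1.card : ℝ) * (G.V2.card : ℝ) →
      G.V1.Nonempty → G.V2.Nonempty →
      ∃ Z1 Z2 : Finset ℕ, Z1 ⊆ G.V1 ∧ Z2 ⊆ G.V2 ∧
        δ * (G.V1.card : ℝ) ≤ (Z1.card : ℝ) ∧ δ * (G.V2.card : ℝ) ≤ (Z2.card : ℝ) ∧
        ∀ Y1 Y2 : Finset ℕ, Y1 ⊆ Z1 → Y2 ⊆ Z2 →
          c * (Z1.card : ℝ) ≤ (Y1.card : ℝ) → c * (Z2.card : ℝ) ≤ (Y2.card : ℝ) →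
          (G.edgeCount Y1 Y2 : ℝ) < (1 - ε) * (Y1.card : ℝ) * (Y2.card : ℝ) :=
  stmt1_general c ε τ hc hε hετ
end

section
/- Let τ ≥ 1 be an integer, let 0 < κ ≤ 1, and let P = (A1,…,AK; B1,…,BL) be a parade in a bigraph G. Then there is a contraction P′ = (A1′,…,AK′; B1′,…,BL′) of P such that |Ai′| ≥ κ^{2^{K+L}·τ^τ}|Ai| for 1 ≤ i ≤ K and |Bj′| ≥ κ^{2^{K+L}·τ^τ}|Bj| for 1 ≤ j ≤ L, and P′ is (κ,τ)-support-invariant. -/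
/-- A parade of length `(K, L)` in a bigraph `G`. -/
structure Parade (G : Bigraph) (K L : ℕ) where
  A : Fin K → Finset ℕ
  B : Fin L → Finset ℕ
  A_sub : ∀ i, A i ⊆ G.V1
  B_sub : ∀ j, B j ⊆ G.V2
  A_ne : ∀ i, (A i).Nonempty
  B_ne : ∀ j, (B j).Nonempty
  A_disj : ∀ i i', i ≠ i' → Disjoint (A i) (A i')
  B_disj : ∀ j j', j ≠ j' → Disjoint (B j) (B j')
  A_card : ∀ i i', (A i).card = (A i').card
  B_card : ∀ j j', (B j).card = (B j').card

namespace Bigraph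

/-- A tree bigraph: underlying graph acyclic and connected on its vertex set. -/
def IsTreeBigraph (T : Bigraph) : Prop :=
  T.underlying.IsAcyclic ∧ (T.underlying.induce ↑(T.V1 ∪ T.V2)).Connected

end Bigraph

/-- `(I, J)` is in the trace of the ordered tree bigraph `T` (sides ordered by `ℕ`)
relative to the parade `P`: there is a rainbow copy of `T`, respecting the orders,
with support `(I, J)`. -/
def InTrace {G : Bigraph} {K L : ℕ} (P : Parade G K L) (T : Bigraph)
    (I : Finset (Fin K)) (J : Finset (Fin L)) : Prop :=
  ∃ (f : ℕ → ℕ) (φ : ℕ → Fin K) (ψ : ℕ → Fin L),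
    (∀ u ∈ T.V1, f u ∈ P.A (φ u)) ∧ (∀ v ∈ T.V2, f v ∈ P.B (ψ v)) ∧
    (∀ u ∈ T.V1, ∀ u' ∈ T.V1, u < u' → φ u < φ u') ∧
    (∀ v ∈ T.V2, ∀ v' ∈ T.V2, v < v' → ψ v < ψ v') ∧
    (∀ u ∈ T.V1, ∀ v ∈ T.V2, T.adj u v = G.adj (f u) (f v)) ∧
    I = T.V1.image φ ∧ J = T.V2.image ψ

/-- `P'` is a contraction of `P`. -/
def IsContraction {G : Bigraph} {K L : ℕ} (P P' : Parade G K L) : Prop :=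
  (∀ i, P'.A i ⊆ P.A i) ∧ (∀ j, P'.B j ⊆ P.B j)

/-- `P` is `(κ, τ)`-support-invariant. -/
def SupportInvariant {G : Bigraph} {K L : ℕ} (P : Parade G K L) (κ : ℝ) (τ : ℕ) : Prop :=
  ∀ P' : Parade G K L, IsContraction P P' →
    (∀ i, κ * ((P.A i).card : ℝ) ≤ ((P'.A i).card : ℝ)) →
    (∀ j, κ * ((P.B j).card : ℝ) ≤ ((P'.B j).card : ℝ)) →
    ∀ T : Bigraph, T.IsTreeBigraph → (T.V1 ∪ T.V2).card ≤ τ →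
      ∀ I J, (InTrace P T I J ↔ InTrace P' T I J)

/-- `P` is `τ`-support-uniform. -/
def SupportUniform {G : Bigraph} {K L : ℕ} (P : Parade G K L) (τ : ℕ) : Prop :=
  ∀ T : Bigraph, T.IsTreeBigraph → (T.V1 ∪ T.V2).card ≤ τ →
    (∀ I J, ¬ InTrace P T I J) ∨
    (∀ (I : Finset (Fin K)) (J : Finset (Fin L)),
       InTrace P T I J ↔ (I.card = T.V1.card ∧ J.card = T.V2.card))

/-- The set `M_v` of copies of a vertex `v` under multiplication by `a`. -/
def Mset (v a : ℕ) : Finset ℕ := (Finset.range a).image (Nat.pair v)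

/-- The bigraph obtained from `G` by `(a, b)`-multiplication. -/
def Bigraph.mult (G : Bigraph) (a b : ℕ) : Bigraph where
  V1 := G.V1.biUnion fun v => Mset v a
  V2 := G.V2.biUnion fun v => Mset v b
  disj := by
    rw [Finset.disjoint_left]
    intro x hx hx2
    simp only [Finset.mem_biUnion, Mset, Finset.mem_image, Finset.mem_range] at hx hx2
    obtain ⟨v, hv, m, _, rfl⟩ := hx
    obtain ⟨w, hw, m', _, hpair⟩ := hx2
    have hvw : w = v := by
      have h := congrArg Nat.unpair hpair
      simp only [Nat.unpair_pair, Prod.mk.injEq] at h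
      exact h.1
    exact Finset.disjoint_left.mp G.disj hv (hvw ▸ hw)
  adj := fun x y => G.adj x.unpair.1 y.unpair.1

/-- Symmetrized adjacency, as a Boolean. -/
def Bigraph.adjS (G : Bigraph) (x y : ℕ) : Bool := G.adj x y || G.adj y x

open scoped Classical in
/-- `X` `λ`-covers `Y`: at least `λ|Y|` vertices of `Y` have a neighbour in `X`. -/
def Covers (G : Bigraph) (lam : ℝ) (X Y : Finset ℕ) : Prop :=
  lam * (Y.card : ℝ) ≤ ((Y.filter fun y => ∃ x ∈ X, G.adjS x y = true).card : ℝ)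

open scoped Classical in
/-- `X` `λ`-misses `Y`: at least `λ|Y|` vertices of `Y` have no neighbour in `X`. -/
def Misses (G : Bigraph) (lam : ℝ) (X Y : Finset ℕ) : Prop :=
  lam * (Y.card : ℝ) ≤ ((Y.filter fun y => ∀ x ∈ X, ¬ G.adjS x y = true).card : ℝ)

/-- The bicomplement of a bigraph. -/
def Bigraph.bicompl (G : Bigraph) : Bigraph where
  V1 := G.V1
  V2 := G.V2
  disj := G.disj
  adj := fun x y => decide (x ∈ G.V1) && decide (y ∈ G.V2) && !(G.adj x y)

/-!
To a parade `P` attach the set of triples `(I, J, c)` such that `(I, J)` lies in the trace of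
some ordered tree bigraph `T` with at most `τ` vertices and `c : Fin τ → Fin τ` is a parent map
of `T` (towards some root) written in positions: the vertices of `V1` in increasing order, then
those of `V2`. In a tree two vertices are adjacent exactly when one is the parent of the other,
so `c` and the side sizes `|I|, |J|` determine the ordered adjacency pattern of `T`, hence its
trace. Thus the set has at most `2 ^ (K + L) * τ ^ τ` elements; it cannot grow under
contraction, and it strictly shrinks under a `κ`-contraction that loses an element of a trace.
Passing to such a contraction as long as one exists therefore stops after at most
`2 ^ (K + L) * τ ^ τ` steps.
-/

open Finset SimpleGraph

namespace Finset

variable {α : Type*} [LinearOrder α] {s t : Finset α} {x : α}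

def rank (s : Finset α) (x : α) : ℕ := #{y ∈ s | y < x}

lemma rank_lt_card (hx : x ∈ s) : s.rank x < #s :=
  card_lt_card (filter_ssubset.2 ⟨x, hx, lt_irrefl x⟩)

lemma rank_strictMonoOn (s : Finset α) : StrictMonoOn s.rank s := by
  intro x hx y _ hxy
  refine card_lt_card ((ssubset_iff_of_subset fun z hz => ?_).2 ⟨x, ?_, ?_⟩)
  · rw [mem_filter] at hz ⊢
    exact ⟨hz.1, hz.2.trans hxy⟩
  · exact mem_filter.2 ⟨hx, hxy⟩
  · simp

lemma image_rank (s : Finset α) : s.image s.rank = range #s := by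
  refine eq_of_subset_of_card_le (fun k hk => ?_) ?_
  · obtain ⟨x, hx, rfl⟩ := mem_image.1 hk
    exact mem_range.2 (rank_lt_card hx)
  · rw [card_range, card_image_of_injOn s.rank_strictMonoOn.injOn]

lemma exists_strictMonoOn_image_eq_rank_eq (h : #s = #t) :
    ∃ σ : α → α, s.image σ = t ∧ StrictMonoOn σ s ∧ ∀ x ∈ s, t.rank (σ x) = s.rank x := by
  have hex : ∀ x ∈ s, ∃ y ∈ t, t.rank y = s.rank x := fun x hx => by
    have : s.rank x ∈ t.image t.rank := by
      rw [image_rank, ← h]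
      exact mem_range.2 (rank_lt_card hx)
    simpa using this
  choose! σ hσt hσ using hex
  have hmono : StrictMonoOn σ s := fun x hx y hy hxy =>
    (t.rank_strictMonoOn.lt_iff_lt (hσt x hx) (hσt y hy)).1 <| by
      rw [hσ x hx, hσ y hy]
      exact s.rank_strictMonoOn hx hy hxy
  refine ⟨σ, eq_of_subset_of_card_le (fun y hy => ?_) ?_, hmono, hσ⟩
  · obtain ⟨x, hx, rfl⟩ := mem_image.1 hy
    exact hσt x hx
  · rw [card_image_of_injOn hmono.injOn, h]

end Finset

namespace SimpleGraph

variable {V : Type*} {G : SimpleGraph V} {r u v : V}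

open Classical in
noncomputable def parent (G : SimpleGraph V) (r v : V) : V :=
  if h : ∃ p : G.Walk v r, p.IsPath then h.choose.snd else v

lemma IsAcyclic.parent_eq_snd (hG : G.IsAcyclic) {p : G.Walk v r} (hp : p.IsPath) :
    G.parent r v = p.snd := by
  have h : ∃ p : G.Walk v r, p.IsPath := ⟨p, hp⟩
  rw [parent, dif_pos h]
  exact congrArg (fun q : G.Path v r => (q : G.Walk v r).snd)
    ((hG.subsingleton_path v r).elim ⟨_, h.choose_spec⟩ ⟨p, hp⟩)

lemma adj_parent_of_ne (h : G.parent r v ≠ v) : G.Adj v (G.parent r v) := by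
  unfold parent at h ⊢
  split_ifs at h ⊢ with hp
  · generalize hp.choose = p at h ⊢
    refine Walk.adj_snd fun hnil => h ?_
    cases hnil
    rfl
  · exact absurd rfl h

lemma IsAcyclic.parent_eq_or_parent_eq_of_adj (hG : G.IsAcyclic) (hu : G.Reachable u r)
    (huv : G.Adj u v) : G.parent r u = v ∨ G.parent r v = u := by
  obtain ⟨p, hp⟩ := (huv.symm.reachable.trans hu).exists_isPath
  by_cases hup : u ∈ p.support
  · exact .inr ((hG.parent_eq_snd hp).trans (hG.eq_snd_of_adj_start hp huv.symm hup).symm)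
  · exact .inl ((hG.parent_eq_snd (hp.cons hup (h := huv))).trans (p.snd_cons huv))

lemma IsAcyclic.adj_iff_parent (hG : G.IsAcyclic) (hu : G.Reachable u r) (huv : u ≠ v) :
    G.Adj u v ↔ G.parent r u = v ∨ G.parent r v = u := by
  refine ⟨hG.parent_eq_or_parent_eq_of_adj hu, ?_⟩
  rintro (h | h)
  · rw [← h]
    exact adj_parent_of_ne (by rwa [h, ne_comm])
  · rw [← h]
    exact (adj_parent_of_ne (by rwa [h])).symm

end SimpleGraph

namespace Bigraph

variable {T : Bigraph} {x y r : ℕ}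

lemma underlying_adj_iff (hx : x ∈ T.V1) (hy : y ∈ T.V2) :
    T.underlying.Adj x y ↔ T.adj x y = true := by
  refine ⟨?_, fun h => .inl ⟨hx, hy, h⟩⟩
  rintro (⟨-, -, h⟩ | ⟨hy1, -, -⟩)
  · exact h
  · exact absurd hy (disjoint_left.1 T.disj hy1)

lemma mem_of_underlying_adj (h : T.underlying.Adj x y) : y ∈ T.V1 ∪ T.V2 := by
  rcases h with ⟨-, hy, -⟩ | ⟨hy, -, -⟩ <;> simp [hy]

lemma parent_mem (hx : x ∈ T.V1 ∪ T.V2) : T.underlying.parent r x ∈ T.V1 ∪ T.V2 := by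
  by_cases h : T.underlying.parent r x = x
  · rwa [h]
  · exact mem_of_underlying_adj (adj_parent_of_ne h)

lemma IsTreeBigraph.reachable (hT : T.IsTreeBigraph) (hx : x ∈ T.V1 ∪ T.V2)
    (hy : y ∈ T.V1 ∪ T.V2) : T.underlying.Reachable x y :=
  (hT.2.preconnected ⟨x, hx⟩ ⟨y, hy⟩).map (Embedding.induce _).toHom

lemma IsTreeBigraph.adj_iff_parent (hT : T.IsTreeBigraph) (hr : r ∈ T.V1 ∪ T.V2)
    (hx : x ∈ T.V1) (hy : y ∈ T.V2) :
    T.adj x y = true ↔ T.underlying.parent r x = y ∨ T.underlying.parent r y = x := by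
  rw [← underlying_adj_iff hx hy]
  exact hT.1.adj_iff_parent (hT.reachable (mem_union_left _ hx) hr)
    fun h => disjoint_left.1 T.disj hx (h ▸ hy)

def pos (T : Bigraph) (x : ℕ) : ℕ := if x ∈ T.V1 then T.V1.rank x else #T.V1 + T.V2.rank x

lemma pos_lt_card (hx : x ∈ T.V1 ∪ T.V2) : T.pos x < #(T.V1 ∪ T.V2) := by
  rw [card_union_of_disjoint T.disj, pos]
  split_ifs with h1
  · have := rank_lt_card h1
    omega
  · have := rank_lt_card ((mem_union.1 hx).resolve_left h1)
    omega

lemma pos_injOn : Set.InjOn T.pos ↑(T.V1 ∪ T.V2) := by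
  intro x hx y hy hxy
  rw [mem_coe, mem_union] at hx hy
  unfold pos at hxy
  split_ifs at hxy with h1 h2 h2
  · exact T.V1.rank_strictMonoOn.injOn h1 h2 hxy
  · have := rank_lt_card h1
    omega
  · have := rank_lt_card h2
    omega
  · exact T.V2.rank_strictMonoOn.injOn (hx.resolve_left h1) (hy.resolve_left h2) (by omega)

def IsParentCode {τ : ℕ} (T : Bigraph) (c : Fin τ → Fin τ) : Prop :=
  ∃ r ∈ T.V1 ∪ T.V2, ∀ x ∈ T.V1 ∪ T.V2, ∀ k : Fin τ,
    T.pos x = k → (c k : ℕ) = T.pos (T.underlying.parent r x)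

lemma exists_isParentCode {τ : ℕ} (hT : T.IsTreeBigraph) (hτ : #(T.V1 ∪ T.V2) ≤ τ) :
    ∃ c : Fin τ → Fin τ, T.IsParentCode c := by
  obtain ⟨⟨r, hr⟩⟩ := hT.2.nonempty
  have hcode : ∀ k : Fin τ, ∃ m : Fin τ, ∀ x ∈ T.V1 ∪ T.V2,
      T.pos x = k → (m : ℕ) = T.pos (T.underlying.parent r x) := by
    intro k
    by_cases hk : ∃ x ∈ T.V1 ∪ T.V2, T.pos x = k
    · obtain ⟨x, hx, hxk⟩ := hk
      refine ⟨⟨_, (pos_lt_card (parent_mem (r := r) hx)).trans_le hτ⟩, fun y hy hyk => ?_⟩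
      rw [pos_injOn hy hx (hyk.trans hxk.symm)]
    · exact ⟨k, fun x hx hxk => absurd ⟨x, hx, hxk⟩ hk⟩
  choose c hc using hcode
  exact ⟨c, r, hr, fun x hx k => hc k x hx⟩

lemma IsParentCode.adj_iff {τ : ℕ} {c : Fin τ → Fin τ} (hT : T.IsTreeBigraph)
    (hc : T.IsParentCode c) (hx : x ∈ T.V1) (hy : y ∈ T.V2) {k l : Fin τ}
    (hk : T.pos x = k) (hl : T.pos y = l) :
    T.adj x y = true ↔ (c k : ℕ) = l ∨ (c l : ℕ) = k := by
  obtain ⟨r, hr, hcr⟩ := hc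
  have hx' := mem_union_left T.V2 hx
  have hy' := mem_union_right T.V1 hy
  rw [hT.adj_iff_parent hr hx hy, hcr x hx' k hk, hcr y hy' l hl, ← hk, ← hl,
    pos_injOn.eq_iff (parent_mem hx') hy', pos_injOn.eq_iff (parent_mem hy') hx']

end Bigraph

section Trace

open Bigraph

variable {G : Bigraph} {K L : ℕ} {P P₁ : Parade G K L} {T T' : Bigraph}
  {I : Finset (Fin K)} {J : Finset (Fin L)}

lemma InTrace.mono (hc : IsContraction P P₁) (h : InTrace P₁ T I J) : InTrace P T I J := by
  obtain ⟨f, φ, ψ, hA, hB, h⟩ := h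
  exact ⟨f, φ, ψ, fun u hu => hc.1 _ (hA u hu), fun v hv => hc.2 _ (hB v hv), h⟩

lemma InTrace.card_eq (h : InTrace P T I J) : #I = #T.V1 ∧ #J = #T.V2 := by
  obtain ⟨-, φ, ψ, -, -, hφ, hψ, -, rfl, rfl⟩ := h
  exact ⟨card_image_of_injOn (StrictMonoOn.injOn fun u hu u' hu' => hφ u hu u' hu'),
    card_image_of_injOn (StrictMonoOn.injOn fun v hv v' hv' => hψ v hv v' hv')⟩

lemma InTrace.comp (h : InTrace P T I J) (σ : ℕ → ℕ) (h₁ : T'.V1.image σ = T.V1)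
    (h₂ : T'.V2.image σ = T.V2) (hσ₁ : StrictMonoOn σ T'.V1) (hσ₂ : StrictMonoOn σ T'.V2)
    (hadj : ∀ x ∈ T'.V1, ∀ y ∈ T'.V2, T'.adj x y = T.adj (σ x) (σ y)) : InTrace P T' I J := by
  obtain ⟨f, φ, ψ, hA, hB, hφ, hψ, hf, rfl, rfl⟩ := h
  have hm₁ : ∀ x ∈ T'.V1, σ x ∈ T.V1 := fun x hx => h₁ ▸ mem_image_of_mem σ hx
  have hm₂ : ∀ y ∈ T'.V2, σ y ∈ T.V2 := fun y hy => h₂ ▸ mem_image_of_mem σ hy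
  refine ⟨f ∘ σ, φ ∘ σ, ψ ∘ σ, fun x hx => hA _ (hm₁ x hx), fun y hy => hB _ (hm₂ y hy),
    fun x hx x' hx' hxx' => hφ _ (hm₁ x hx) _ (hm₁ x' hx') (hσ₁ hx hx' hxx'),
    fun y hy y' hy' hyy' => hψ _ (hm₂ y hy) _ (hm₂ y' hy') (hσ₂ hy hy' hyy'),
    fun x hx y hy => (hadj x hx y hy).trans (hf _ (hm₁ x hx) _ (hm₂ y hy)), ?_, ?_⟩
  · rw [← h₁, image_image]
  · rw [← h₂, image_image]

lemma InTrace.of_pos_adj_eq (h : InTrace P T I J) (h₁ : #T.V1 = #T'.V1) (h₂ : #T.V2 = #T'.V2)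
    (hadj : ∀ x ∈ T.V1, ∀ y ∈ T.V2, ∀ x' ∈ T'.V1, ∀ y' ∈ T'.V2,
      T.pos x = T'.pos x' → T.pos y = T'.pos y' → T.adj x y = T'.adj x' y') :
    InTrace P T' I J := by
  classical
  obtain ⟨σ₁, hσ₁, hm₁, hr₁⟩ := exists_strictMonoOn_image_eq_rank_eq h₁.symm
  obtain ⟨σ₂, hσ₂, hm₂, hr₂⟩ := exists_strictMonoOn_image_eq_rank_eq h₂.symm
  have hV₂ : ∀ y ∈ T'.V2, y ∉ T'.V1 := fun y hy hy₁ => disjoint_left.1 T'.disj hy₁ hy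
  let σ : ℕ → ℕ := fun x => if x ∈ T'.V1 then σ₁ x else σ₂ x
  have he₁ : Set.EqOn σ₁ σ T'.V1 := fun x hx => (if_pos hx).symm
  have he₂ : Set.EqOn σ₂ σ T'.V2 := fun y hy => (if_neg (hV₂ y hy)).symm
  refine h.comp σ ((image_congr he₁).symm.trans hσ₁) ((image_congr he₂).symm.trans hσ₂)
    (hm₁.congr he₁) (hm₂.congr he₂) fun x hx y hy => ?_
  have hx₁ : σ₁ x ∈ T.V1 := hσ₁ ▸ mem_image_of_mem σ₁ hx
  have hy₂ : σ₂ y ∈ T.V2 := hσ₂ ▸ mem_image_of_mem σ₂ hy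
  rw [← he₁ hx, ← he₂ hy]
  refine (hadj _ hx₁ _ hy₂ x hx y hy ?_ ?_).symm
  · rw [pos, pos, if_pos hx₁, if_pos hx, hr₁ x hx]
  · rw [pos, pos, if_neg (fun h => disjoint_left.1 T.disj h hy₂), if_neg (hV₂ y hy), hr₂ y hy,
      h₁]

lemma InTrace.of_isParentCode {τ : ℕ} {c : Fin τ → Fin τ} (h : InTrace P T I J)
    (hT : T.IsTreeBigraph) (hT' : T'.IsTreeBigraph) (hτ : #(T.V1 ∪ T.V2) ≤ τ)
    (hc : T.IsParentCode c) (hc' : T'.IsParentCode c) (h₁ : #T.V1 = #T'.V1)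
    (h₂ : #T.V2 = #T'.V2) : InTrace P T' I J := by
  refine h.of_pos_adj_eq h₁ h₂ fun x hx y hy x' hx' y' hy' hpx hpy => ?_
  have hk := pos_lt_card (mem_union_left T.V2 hx)
  have hl := pos_lt_card (mem_union_right T.V1 hy)
  let k : Fin τ := ⟨_, hk.trans_le hτ⟩
  let l : Fin τ := ⟨_, hl.trans_le hτ⟩
  rw [Bool.eq_iff_iff, hc.adj_iff hT hx hy (k := k) (l := l) rfl rfl,
    hc'.adj_iff hT' hx' hy' (k := k) (l := l) hpx.symm hpy.symm]

end Trace

section Descent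

open Bigraph

variable {G : Bigraph} {K L τ : ℕ} {κ μ ν : ℝ} {P P₁ P₂ : Parade G K L}

def IsContractionOfRatio (μ : ℝ) (P P' : Parade G K L) : Prop :=
  IsContraction P P' ∧ (∀ i, μ * ((P.A i).card : ℝ) ≤ ((P'.A i).card : ℝ)) ∧
    (∀ j, μ * ((P.B j).card : ℝ) ≤ ((P'.B j).card : ℝ))

lemma IsContractionOfRatio.refl (hμ : μ ≤ 1) (P : Parade G K L) : IsContractionOfRatio μ P P :=
  ⟨⟨fun _ => subset_rfl, fun _ => subset_rfl⟩,
    fun _ => mul_le_of_le_one_left (Nat.cast_nonneg _) hμ,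
    fun _ => mul_le_of_le_one_left (Nat.cast_nonneg _) hμ⟩

lemma IsContractionOfRatio.trans (h₁ : IsContractionOfRatio μ P P₁)
    (h₂ : IsContractionOfRatio ν P₁ P₂) (hν : 0 ≤ ν) : IsContractionOfRatio (ν * μ) P P₂ := by
  obtain ⟨⟨hA₁, hB₁⟩, hμA, hμB⟩ := h₁
  obtain ⟨⟨hA₂, hB₂⟩, hνA, hνB⟩ := h₂
  refine ⟨⟨fun i => (hA₂ i).trans (hA₁ i), fun j => (hB₂ j).trans (hB₁ j)⟩,
    fun i => ?_, fun j => ?_⟩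
  · rw [mul_assoc]
    exact (mul_le_mul_of_nonneg_left (hμA i) hν).trans (hνA i)
  · rw [mul_assoc]
    exact (mul_le_mul_of_nonneg_left (hμB j) hν).trans (hνB j)

open Classical in
noncomputable def traceCodes (τ : ℕ) (P : Parade G K L) :
    Finset (Finset (Fin K) × Finset (Fin L) × (Fin τ → Fin τ)) :=
  {x | ∃ T : Bigraph, T.IsTreeBigraph ∧ #(T.V1 ∪ T.V2) ≤ τ ∧ InTrace P T x.1 x.2.1 ∧
    T.IsParentCode x.2.2}

lemma card_traceCodes_le (τ : ℕ) (P : Parade G K L) :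
    #(traceCodes τ P) ≤ 2 ^ (K + L) * τ ^ τ := by
  refine (card_le_univ _).trans_eq ?_
  simp only [Fintype.card_prod, Fintype.card_finset, Fintype.card_fun, Fintype.card_fin, pow_add,
    mul_assoc]

lemma traceCodes_mono (hc : IsContraction P P₁) : traceCodes τ P₁ ⊆ traceCodes τ P := by
  intro x hx
  simp only [traceCodes, mem_filter, mem_univ, true_and] at hx ⊢
  obtain ⟨T, hT, hτ, hin, hcode⟩ := hx
  exact ⟨T, hT, hτ, hin.mono hc, hcode⟩

lemma traceCodes_ssubset_of_not_inTrace {T : Bigraph} {I : Finset (Fin K)} {J : Finset (Fin L)}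
    (hc : IsContraction P P₁) (hT : T.IsTreeBigraph) (hτ : #(T.V1 ∪ T.V2) ≤ τ)
    (hin : InTrace P T I J) (hout : ¬ InTrace P₁ T I J) : traceCodes τ P₁ ⊂ traceCodes τ P := by
  obtain ⟨c, hcode⟩ := exists_isParentCode hT hτ
  refine (ssubset_iff_of_subset (traceCodes_mono hc)).2 ⟨(I, J, c), ?_, ?_⟩
  · simp only [traceCodes, mem_filter, mem_univ, true_and]
    exact ⟨T, hT, hτ, hin, hcode⟩
  · simp only [traceCodes, mem_filter, mem_univ, true_and, not_exists, not_and]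
    intro T' hT' hτ' hin' hcode'
    obtain ⟨hI, hJ⟩ := hin.card_eq
    obtain ⟨hI', hJ'⟩ := hin'.card_eq
    exact hout (hin'.of_isParentCode hT' hT hτ' hcode' hcode (hI'.symm.trans hI)
      (hJ'.symm.trans hJ))

lemma exists_traceCodes_ssubset_of_not_supportInvariant (h : ¬ SupportInvariant P κ τ) :
    ∃ P₁, IsContractionOfRatio κ P P₁ ∧ traceCodes τ P₁ ⊂ traceCodes τ P := by
  simp only [SupportInvariant, not_forall] at h
  obtain ⟨P₁, hc, hA, hB, T, hT, hτ, I, J, hiff⟩ := h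
  have hout : ¬ InTrace P₁ T I J := fun h₁ => hiff ⟨fun _ => h₁, fun _ => h₁.mono hc⟩
  have hin : InTrace P T I J := by_contra fun h₀ => hiff (iff_of_false h₀ hout)
  exact ⟨P₁, ⟨hc, hA, hB⟩, traceCodes_ssubset_of_not_inTrace hc hT hτ hin hout⟩

lemma exists_supportInvariant_of_card_traceCodes_le (hκ0 : 0 ≤ κ) (hκ1 : κ ≤ 1) (n : ℕ)
    (P : Parade G K L) (hP : #(traceCodes τ P) ≤ n) :
    ∃ P', IsContractionOfRatio (κ ^ n) P P' ∧ SupportInvariant P' κ τ := by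
  induction n generalizing P with
  | zero =>
    refine ⟨P, .refl (pow_zero κ).le P, not_not.1 fun hinv => ?_⟩
    obtain ⟨P₁, -, hlt⟩ := exists_traceCodes_ssubset_of_not_supportInvariant hinv
    have := card_lt_card hlt
    omega
  | succ n ih =>
    by_cases hinv : SupportInvariant P κ τ
    · exact ⟨P, .refl (pow_le_one₀ hκ0 hκ1) P, hinv⟩
    obtain ⟨P₁, h₁, hlt⟩ := exists_traceCodes_ssubset_of_not_supportInvariant hinv
    obtain ⟨P', h', hinv'⟩ := ih P₁ (by have := card_lt_card hlt; omega)
    exact ⟨P', pow_succ κ n ▸ h₁.trans h' (pow_nonneg hκ0 n), hinv'⟩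

end Descent

theorem stmt6_general (τ : ℕ) (κ : ℝ) (hκ0 : 0 < κ) (hκ1 : κ ≤ 1)
    (G : Bigraph) (K L : ℕ) (P : Parade G K L) :
    ∃ P' : Parade G K L, IsContraction P P' ∧
      (∀ i, κ ^ (2 ^ (K + L) * τ ^ τ) * ((P.A i).card : ℝ) ≤ ((P'.A i).card : ℝ)) ∧
      (∀ j, κ ^ (2 ^ (K + L) * τ ^ τ) * ((P.B j).card : ℝ) ≤ ((P'.B j).card : ℝ)) ∧
      SupportInvariant P' κ τ := by
  obtain ⟨P', ⟨hc, hA, hB⟩, hinv⟩ :=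
    exists_supportInvariant_of_card_traceCodes_le hκ0.le hκ1 _ P (card_traceCodes_le τ P)
  exact ⟨P', hc, hA, hB, hinv⟩

/-- Theorem 5.1 of the paper: every parade has a contraction, with controlled loss
of width, that is `(κ, τ)`-support-invariant. -/
theorem stmt6 (τ : ℕ) (hτ : 1 ≤ τ) (κ : ℝ) (hκ0 : 0 < κ) (hκ1 : κ ≤ 1)
    (G : Bigraph) (K L : ℕ) (P : Parade G K L) :
    ∃ P' : Parade G K L, IsContraction P P' ∧
      (∀ i, κ ^ (2 ^ (K + L) * τ ^ τ) * ((P.A i).card : ℝ) ≤ ((P'.A i).card : ℝ)) ∧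
      (∀ j, κ ^ (2 ^ (K + L) * τ ^ τ) * ((P.B j).card : ℝ) ≤ ((P'.B j).card : ℝ)) ∧
      SupportInvariant P' κ τ :=
  stmt6_general τ κ hκ0 hκ1 G K L P
end

section
/- For all integers k, τ ≥ 0 there exists an integer K ≥ 0 with the following property: every parade P of length (K,K) in a bigraph G has a sub-parade of length (k,k) that is τ-support-uniform. -/
/-!
Colour a pair `(I, J)` of index sets of `P`, with `I` entirely below `J`, by the set of ordered
biadjacency matrices that have a rainbow copy in `P` with support `(I, J)`. Ramsey's theorem,
applied once for each size `(p, q)` with `p, q ≤ τ`, yields `2k` indices on which this colour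
depends only on `(|I|, |J|)`; the first `k` of them index the `A`-blocks and the last `k` the
`B`-blocks of `Q`. Whether `Q` has a rainbow copy of an ordered tree `T` with support `(I, J)`
depends only on the biadjacency matrix of `T` and on the colour of the image of `(I, J)` in `P`,
hence only on `(|I|, |J|)`.

Ramsey's theorem itself is proved by induction on the size of the coloured sets, through
end-homogeneous sets.
-/

open Finset

universe u

section Ramsey

variable {α : Type*} [LinearOrder α] {C : Type*}

def IsHomogeneous (c : Finset α → C) (n : ℕ) (B : Finset α) : Prop :=
  ∃ b, ∀ S ⊆ B, #S = n → c S = b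

def IsEndHomogeneous (c : Finset α → C) (n : ℕ) (D : Finset α) (col : α → C) : Prop :=
  ∀ x ∈ D, ∀ S ⊆ D.filter (x < ·), #S = n → c (insert x S) = col x

theorem IsEndHomogeneous.isHomogeneous_filter [DecidableEq C] {c : Finset α → C} {n : ℕ}
    {D : Finset α} {col : α → C} (hD : IsEndHomogeneous c n D col) (b : C) :
    IsHomogeneous c (n + 1) (D.filter (col · = b)) := by
  refine ⟨b, fun S hS hcard => ?_⟩
  have hne : S.Nonempty := card_pos.mp (by omega)
  set x := S.min' hne
  have hxS : x ∈ S := S.min'_mem hne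
  obtain ⟨hxD, hxb⟩ := mem_filter.mp (hS hxS)
  have hrest : S.erase x ⊆ D.filter (x < ·) := fun y hy =>
    mem_filter.mpr
      ⟨(mem_filter.mp (hS (mem_of_mem_erase hy))).1, S.min'_lt_of_mem_erase_min' hne hy⟩
  calc c S = c (insert x (S.erase x)) := by rw [insert_erase hxS]
    _ = col x := hD x hxD _ hrest (by rw [card_erase_of_mem hxS, hcard]; rfl)
    _ = b := hxb

/-- Greedily: keep the minimum `x` of `A` and shrink the rest of `A` to a set on which
`S ↦ c (insert x S)` is homogeneous. -/
theorem exists_isEndHomogeneous_subset {n : ℕ} {f : ℕ → ℕ}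
    (hf : ∀ m (c : Finset α → C) (A : Finset α), f m ≤ #A →
      ∃ B ⊆ A, m ≤ #B ∧ IsHomogeneous c n B)
    (c : Finset α → C) (t : ℕ) (A : Finset α) (hA : (fun N => f N + 1)^[t] 0 ≤ #A) :
    ∃ D ⊆ A, t ≤ #D ∧ ∃ col, IsEndHomogeneous c n D col := by
  induction t generalizing A with
  | zero => exact ⟨∅, empty_subset _, le_rfl, fun _ => c ∅, by simp [IsEndHomogeneous]⟩
  | succ t ih =>
    rw [Function.iterate_succ_apply'] at hA
    have hne : A.Nonempty := card_pos.mp (by omega)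
    set x := A.min' hne
    have hxA : x ∈ A := A.min'_mem hne
    obtain ⟨B, hBA, hB, b, hb⟩ := hf ((fun N => f N + 1)^[t] 0) (fun S => c (insert x S))
      (A.erase x) (by rw [card_erase_of_mem hxA]; omega)
    obtain ⟨D, hDB, hD, col, hcol⟩ := ih B hB
    have hDA : D ⊆ A.erase x := hDB.trans hBA
    have hxD : x ∉ D := fun h => (ne_of_mem_erase (hDA h)) rfl
    have hxlt : ∀ y ∈ D, x < y := fun y hy =>
      A.min'_lt_of_mem_erase_min' hne (hDA hy)
    refine ⟨insert x D, insert_subset hxA (hDA.trans (erase_subset _ _)),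
      by rw [card_insert_of_notMem hxD]; omega, Function.update col x b, ?_⟩
    intro y hy S hS hcard
    have hSD : ∀ z ∈ S, z ∈ D ∧ y < z := fun z hz => by
      obtain ⟨hz, hyz⟩ := mem_filter.mp (hS hz)
      refine ⟨(mem_insert.mp hz).resolve_left ?_, hyz⟩
      rintro rfl
      rcases mem_insert.mp hy with rfl | hy
      · exact lt_irrefl _ hyz
      · exact lt_asymm hyz (hxlt y hy)
    rcases mem_insert.mp hy with rfl | hy
    · rw [Function.update_self]
      exact hb S (fun z hz => hDB (hSD z hz).1) hcard
    · rw [Function.update_of_ne (hxlt y hy).ne']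
      exact hcol y hy S (fun z hz => mem_filter.mpr (hSD z hz)) hcard

theorem exists_isHomogeneous_subset (C : Type*) [Fintype C] (n m : ℕ) :
    ∃ N, ∀ {α : Type u} [LinearOrder α] (c : Finset α → C) (A : Finset α), N ≤ #A →
      ∃ B ⊆ A, m ≤ #B ∧ IsHomogeneous c n B := by
  induction n generalizing m with
  | zero =>
    exact ⟨m, fun c A hA => ⟨A, subset_rfl, hA, c ∅, fun S _ hS => by rw [card_eq_zero.mp hS]⟩⟩
  | succ n ih =>
    classical
    choose f hf using ih
    refine ⟨(fun N => f N + 1)^[Fintype.card C * m] 0, fun c A hA => ?_⟩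
    obtain ⟨D, hDA, hD, col, hcol⟩ := exists_isEndHomogeneous_subset (fun m => hf m) c _ A hA
    have : Nonempty C := ⟨c ∅⟩
    obtain ⟨b, -, hb⟩ := exists_le_card_fiber_of_mul_le_card_of_maps_to
      (fun x _ => mem_univ (col x)) univ_nonempty (by rwa [card_univ])
    exact ⟨_, (filter_subset _ _).trans hDA, hb, hcol.isHomogeneous_filter b⟩

end Ramsey

section Bipartite

variable {α : Type*} [LinearOrder α] {C : Type*}

def IsBihomogeneous (c : Finset α → Finset α → C) (p q : ℕ) (B : Finset α) : Prop :=
  ∃ b, ∀ I ⊆ B, ∀ J ⊆ B, #I = p → #J = q → (∀ x ∈ I, ∀ y ∈ J, x < y) → c I J = b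

theorem IsBihomogeneous.mono {c : Finset α → Finset α → C} {p q : ℕ} {B B' : Finset α}
    (h : IsBihomogeneous c p q B) (hB' : B' ⊆ B) : IsBihomogeneous c p q B' :=
  let ⟨b, hb⟩ := h
  ⟨b, fun I hI J hJ => hb I (hI.trans hB') J (hJ.trans hB')⟩

theorem IsBihomogeneous.exists_image_eq {β : Type*}
    {c : Finset α → Finset α → C} {p q : ℕ} {B : Finset α} (h : IsBihomogeneous c p q B)
    {r s : β → α} (hr : Function.Injective r) (hs : Function.Injective s)
    (hrB : ∀ i, r i ∈ B) (hsB : ∀ j, s j ∈ B) (hrs : ∀ i j, r i < s j) :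
    ∃ b, ∀ I J : Finset β, #I = p → #J = q → c (I.image r) (J.image s) = b := by
  obtain ⟨b, hb⟩ := h
  refine ⟨b, fun I J hI hJ => hb _ ?_ _ ?_ ?_ ?_ ?_⟩
  · simpa only [image_subset_iff] using fun i _ => hrB i
  · simpa only [image_subset_iff] using fun j _ => hsB j
  · rw [card_image_of_injective _ hr, hI]
  · rw [card_image_of_injective _ hs, hJ]
  · simp only [mem_image]
    rintro _ ⟨i, -, rfl⟩ _ ⟨j, -, rfl⟩
    exact hrs i j

/-- The `p` smallest elements of `S`. -/
def lowPart (p : ℕ) (S : Finset α) : Finset α :=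
  S.filter fun x => #(S.filter (· < x)) < p

theorem lowPart_union {I J : Finset α} (hIJ : ∀ x ∈ I, ∀ y ∈ J, x < y) :
    lowPart #I (I ∪ J) = I := by
  ext x
  simp only [lowPart, mem_filter, mem_union]
  constructor
  · rintro ⟨hx | hx, hlt⟩
    · exact hx
    · have hI : I ⊆ (I ∪ J).filter (· < x) := fun z hz =>
        mem_filter.mpr ⟨mem_union_left _ hz, hIJ z hz x hx⟩
      exact absurd (card_le_card hI) hlt.not_ge
  · intro hx
    refine ⟨Or.inl hx,
      card_lt_card ⟨fun z hz => ?_, fun h => lt_irrefl x (mem_filter.mp (h hx)).2⟩⟩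
    obtain ⟨hz, hzx⟩ := mem_filter.mp hz
    rcases mem_union.mp hz with hz | hz
    · exact hz
    · exact absurd (hIJ x hx z hz) hzx.not_gt

/-- Colour `I ∪ J` and recover `I` as its `p` smallest elements. -/
theorem exists_isBihomogeneous_subset (C : Type*) [Fintype C] (p q m : ℕ) :
    ∃ N, ∀ {α : Type u} [LinearOrder α] (c : Finset α → Finset α → C) (A : Finset α), N ≤ #A →
      ∃ B ⊆ A, m ≤ #B ∧ IsBihomogeneous c p q B := by
  obtain ⟨N, hN⟩ := exists_isHomogeneous_subset C (p + q) m
  refine ⟨N, fun c A hA => ?_⟩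
  obtain ⟨B, hBA, hB, b, hb⟩ := hN (fun S => c (lowPart p S) (S \ lowPart p S)) A hA
  refine ⟨B, hBA, hB, b, fun I hI J hJ hIp hJq hIJ => ?_⟩
  have hdisj : Disjoint I J := disjoint_left.mpr fun x hxI hxJ => lt_irrefl x (hIJ x hxI x hxJ)
  have hlow : lowPart p (I ∪ J) = I := hIp ▸ lowPart_union hIJ
  have := hb (I ∪ J) (union_subset hI hJ) (by rw [card_union_of_disjoint hdisj, hIp, hJq])
  simpa only [hlow, union_sdiff_cancel_left hdisj] using this

theorem exists_isBihomogeneous_subset_forall {C : ℕ × ℕ → Type*} [∀ pq, Fintype (C pq)]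
    (s : Finset (ℕ × ℕ)) (m : ℕ) :
    ∃ N, ∀ {α : Type u} [LinearOrder α] (c : ∀ pq, Finset α → Finset α → C pq) (A : Finset α),
      N ≤ #A → ∃ B ⊆ A, m ≤ #B ∧ ∀ pq ∈ s, IsBihomogeneous (c pq) pq.1 pq.2 B := by
  induction s using Finset.induction_on generalizing m with
  | empty => exact ⟨m, fun c A hA => ⟨A, subset_rfl, hA, by simp⟩⟩
  | insert pq s _ ih =>
    obtain ⟨N', hN'⟩ := ih m
    obtain ⟨N, hN⟩ := exists_isBihomogeneous_subset (C pq) pq.1 pq.2 N'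
    refine ⟨N, fun c A hA => ?_⟩
    obtain ⟨B₀, hB₀A, hB₀, hhom₀⟩ := hN (c pq) A hA
    obtain ⟨B, hBB₀, hB, hhom⟩ := hN' c B₀ hB₀
    refine ⟨B, hBB₀.trans hB₀A, hB, fun pq' hpq' => ?_⟩
    rcases mem_insert.mp hpq' with rfl | h
    · exact hhom₀.mono hBB₀
    · exact hhom pq' h

theorem exists_orderEmbedding_pair_lt {k : ℕ} {B : Finset α} (hB : k + k ≤ #B) :
    ∃ r s : Fin k ↪o α, (∀ i, r i ∈ B) ∧ (∀ j, s j ∈ B) ∧ ∀ i j, r i < s j := by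
  obtain ⟨B', hB'B, hB'⟩ := exists_subset_card_eq hB
  set o := B'.orderEmbOfFin hB'
  refine ⟨(Fin.castAddOrderEmb k).trans o, (Fin.natAddOrderEmb k).trans o,
    fun i => hB'B (B'.orderEmbOfFin_mem hB' _), fun j => hB'B (B'.orderEmbOfFin_mem hB' _),
    fun i j => o.strictMono ?_⟩
  show Fin.castAdd k i < Fin.natAdd k j
  simp only [Fin.lt_def, Fin.val_castAdd, Fin.val_natAdd]
  omega

end Bipartite

theorem exists_strictMono_comp_eq_of_range_eq_image {ι β γ : Type*} [Preorder ι] [Preorder β]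
    [Preorder γ] (r : β ↪o γ) {e' : ι → γ} (he' : StrictMono e') {I : Set β}
    (h : Set.range e' = r '' I) : ∃ e : ι → β, StrictMono e ∧ Set.range e = I ∧ r ∘ e = e' := by
  choose e he using fun a => (h ▸ Set.mem_range_self a : e' a ∈ r '' I)
  have hre : r ∘ e = e' := funext fun a => (he a).2
  refine ⟨e, fun a b hab => r.lt_iff_lt.mp ?_, Set.image_injective.mpr r.injective ?_, hre⟩
  · rw [(he a).2, (he b).2]
    exact he' hab
  · rw [← Set.range_comp, hre, h]

theorem card_eq_of_range_eq {α : Type*} [DecidableEq α] {n : ℕ} {e : Fin n → α}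
    (he : Function.Injective e) {I : Finset α} (hI : Set.range e = I) : #I = n := by
  have himage : univ.image e = I := coe_injective (by rw [coe_image, coe_univ, Set.image_univ, hI])
  rw [← himage, card_image_of_injective _ he, card_fin]

section OrderEmbOfFin

variable {α β : Type*} [LinearOrder α] (V : Finset α)

theorem coe_image_eq_range_comp_orderEmbOfFin [DecidableEq β] (φ : α → β) :
    (V.image φ : Set β) = Set.range (φ ∘ V.orderEmbOfFin rfl) := by
  rw [Set.range_comp, range_orderEmbOfFin, coe_image]

theorem exists_orderEmbOfFin_eq {w : α} (hw : w ∈ V) : ∃ a, V.orderEmbOfFin rfl a = w := by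
  rwa [← Set.mem_range, range_orderEmbOfFin]

theorem strictMonoOn_iff_strictMono_comp_orderEmbOfFin [Preorder β] (φ : α → β) :
    StrictMonoOn φ V ↔ StrictMono (φ ∘ V.orderEmbOfFin rfl) := by
  refine ⟨fun h a b hab => h (orderEmbOfFin_mem _ _ a) (orderEmbOfFin_mem _ _ b)
    ((V.orderEmbOfFin rfl).strictMono hab), fun h w hw w' hw' hlt => ?_⟩
  obtain ⟨a, rfl⟩ := exists_orderEmbOfFin_eq V hw
  obtain ⟨b, rfl⟩ := exists_orderEmbOfFin_eq V hw'
  exact h ((V.orderEmbOfFin rfl).lt_iff_lt.mp hlt)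

end OrderEmbOfFin

/-- The ordered biadjacency matrix of `T`: rows and columns are `V1` and `V2` listed in
increasing order. -/
def Bigraph.biadjMatrix (T : Bigraph) : Fin #T.V1 → Fin #T.V2 → Bool :=
  fun a b => T.adj (T.V1.orderEmbOfFin rfl a) (T.V2.orderEmbOfFin rfl b)

namespace Parade

variable {G : Bigraph} {K L : ℕ}

def restrict (P : Parade G K L) {k l : ℕ} (r : Fin k ↪o Fin K) (s : Fin l ↪o Fin L) :
    Parade G k l where
  A i := P.A (r i)
  B j := P.B (s j)
  A_sub _ := P.A_sub _
  B_sub _ := P.B_sub _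
  A_ne _ := P.A_ne _
  B_ne _ := P.B_ne _
  A_disj _ _ h := P.A_disj _ _ (r.injective.ne h)
  B_disj _ _ h := P.B_disj _ _ (s.injective.ne h)
  A_card _ _ := P.A_card _ _
  B_card _ _ := P.B_card _ _

/-- `P` has a rainbow copy, with support `(I, J)`, of the ordered bigraph whose biadjacency
matrix is `M`. -/
def Realizes (P : Parade G K L) {p q : ℕ} (M : Fin p → Fin q → Bool) (I : Finset (Fin K))
    (J : Finset (Fin L)) : Prop :=
  ∃ (e : Fin p → Fin K) (g : Fin q → Fin L) (x : Fin p → ℕ) (y : Fin q → ℕ),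
    StrictMono e ∧ StrictMono g ∧ Set.range e = I ∧ Set.range g = J ∧
    (∀ a, x a ∈ P.A (e a)) ∧ (∀ b, y b ∈ P.B (g b)) ∧ ∀ a b, G.adj (x a) (y b) = M a b

variable {P : Parade G K L} {p q : ℕ} {M : Fin p → Fin q → Bool} {I : Finset (Fin K)}
  {J : Finset (Fin L)}

theorem Realizes.card_eq (h : P.Realizes M I J) : #I = p ∧ #J = q := by
  obtain ⟨e, g, -, -, he, hg, hI, hJ, -⟩ := h
  exact ⟨card_eq_of_range_eq he.injective hI, card_eq_of_range_eq hg.injective hJ⟩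

theorem realizes_restrict_iff {k l : ℕ} (r : Fin k ↪o Fin K) (s : Fin l ↪o Fin L)
    {I : Finset (Fin k)} {J : Finset (Fin l)} :
    (P.restrict r s).Realizes M I J ↔ P.Realizes M (I.image r) (J.image s) := by
  constructor
  · rintro ⟨e, g, x, y, he, hg, hI, hJ, hx, hy, hxy⟩
    refine ⟨r ∘ e, s ∘ g, x, y, r.strictMono.comp he, s.strictMono.comp hg, ?_, ?_, hx, hy, hxy⟩
    · rw [Set.range_comp, hI, coe_image]
    · rw [Set.range_comp, hJ, coe_image]
  · rintro ⟨e', g', x, y, he', hg', hI, hJ, hx, hy, hxy⟩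
    rw [coe_image] at hI hJ
    obtain ⟨e, he, hIe, rfl⟩ := exists_strictMono_comp_eq_of_range_eq_image r he' hI
    obtain ⟨g, hg, hJg, rfl⟩ := exists_strictMono_comp_eq_of_range_eq_image s hg' hJ
    exact ⟨e, g, x, y, he, hg, hIe, hJg, hx, hy, hxy⟩

variable {T : Bigraph}

theorem _root_.InTrace.realizes (h : InTrace P T I J) : P.Realizes T.biadjMatrix I J := by
  obtain ⟨f, φ, ψ, hfA, hfB, hφ, hψ, hadj, rfl, rfl⟩ := h
  have hu := T.V1.orderEmbOfFin_mem rfl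
  have hv := T.V2.orderEmbOfFin_mem rfl
  exact ⟨_, _, f ∘ T.V1.orderEmbOfFin rfl, f ∘ T.V2.orderEmbOfFin rfl,
    (strictMonoOn_iff_strictMono_comp_orderEmbOfFin _ φ).mp hφ,
    (strictMonoOn_iff_strictMono_comp_orderEmbOfFin _ ψ).mp hψ,
    (coe_image_eq_range_comp_orderEmbOfFin _ _).symm,
    (coe_image_eq_range_comp_orderEmbOfFin _ _).symm,
    fun a => hfA _ (hu a), fun b => hfB _ (hv b), fun a b => (hadj _ (hu a) _ (hv b)).symm⟩

/-- `Nonempty` supplies the junk values of `φ` and `ψ` off the vertices of `T`. -/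
theorem Realizes.inTrace [Nonempty (Fin K)] [Nonempty (Fin L)]
    (h : P.Realizes T.biadjMatrix I J) : InTrace P T I J := by
  classical
  obtain ⟨e, g, x, y, he, hg, hI, hJ, hx, hy, hxy⟩ := h
  have hu := (T.V1.orderEmbOfFin rfl).injective
  have hv := (T.V2.orderEmbOfFin rfl).injective
  set f : ℕ → ℕ := fun w => if w ∈ T.V1 then Function.extend (T.V1.orderEmbOfFin rfl) x 0 w
    else Function.extend (T.V2.orderEmbOfFin rfl) y 0 w
  have hfu : ∀ a, f (T.V1.orderEmbOfFin rfl a) = x a := fun a => by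
    simp only [f, if_pos (orderEmbOfFin_mem T.V1 rfl a), hu.extend_apply]
  have hfv : ∀ b, f (T.V2.orderEmbOfFin rfl b) = y b := fun b => by
    simp only [f, if_neg (disjoint_right.mp T.disj (orderEmbOfFin_mem T.V2 rfl b)),
      hv.extend_apply]
  set φ := Function.extend (T.V1.orderEmbOfFin rfl) e fun _ => Classical.arbitrary _
  set ψ := Function.extend (T.V2.orderEmbOfFin rfl) g fun _ => Classical.arbitrary _
  have hφu : ∀ a, φ (T.V1.orderEmbOfFin rfl a) = e a := hu.extend_apply e _
  have hψv : ∀ b, ψ (T.V2.orderEmbOfFin rfl b) = g b := hv.extend_apply g _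
  have hφ : φ ∘ T.V1.orderEmbOfFin rfl = e := funext hφu
  have hψ : ψ ∘ T.V2.orderEmbOfFin rfl = g := funext hψv
  refine ⟨f, φ, ψ, fun w hw => ?_, fun w hw => ?_,
    (strictMonoOn_iff_strictMono_comp_orderEmbOfFin _ φ).mpr (hφ ▸ he),
    (strictMonoOn_iff_strictMono_comp_orderEmbOfFin _ ψ).mpr (hψ ▸ hg), fun w hw w' hw' => ?_,
    coe_injective ?_, coe_injective ?_⟩
  · obtain ⟨a, rfl⟩ := exists_orderEmbOfFin_eq _ hw
    rw [hfu, hφu]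
    exact hx a
  · obtain ⟨b, rfl⟩ := exists_orderEmbOfFin_eq _ hw
    rw [hfv, hψv]
    exact hy b
  · obtain ⟨a, rfl⟩ := exists_orderEmbOfFin_eq _ hw
    obtain ⟨b, rfl⟩ := exists_orderEmbOfFin_eq _ hw'
    rw [hfu, hfv, hxy]
    rfl
  · rw [← hI, coe_image_eq_range_comp_orderEmbOfFin, hφ]
  · rw [← hJ, coe_image_eq_range_comp_orderEmbOfFin, hψ]

end Parade

/-- Theorem 5.2 of the paper: for all `k, τ` there is `K` such that every parade of
length `(K, K)` has a sub-parade of length `(k, k)` that is `τ`-support-uniform. -/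
theorem stmt7 (k τ : ℕ) :
    ∃ K : ℕ, ∀ (G : Bigraph) (P : Parade G K K),
      ∃ (Q : Parade G k k) (r s : Fin k → Fin K), StrictMono r ∧ StrictMono s ∧
        (∀ i, Q.A i = P.A (r i)) ∧ (∀ i, Q.B i = P.B (s i)) ∧
        SupportUniform Q τ := by
  classical
  obtain ⟨K, hK⟩ := exists_isBihomogeneous_subset_forall.{0}
    (C := fun pq : ℕ × ℕ => (Fin pq.1 → Fin pq.2 → Bool) → Prop) (Iic τ ×ˢ Iic τ) (k + k)
  refine ⟨K, fun G P => ?_⟩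
  obtain ⟨B, -, hB, hhom⟩ := hK (fun _ I J M => P.Realizes M I J) univ (by simp)
  obtain ⟨r, s, hrB, hsB, hrs⟩ := exists_orderEmbedding_pair_lt hB
  refine ⟨P.restrict r s, r, s, r.strictMono, s.strictMono, fun _ => rfl, fun _ => rfl,
    fun T _ hτ => or_iff_not_imp_left.mpr fun hempty => ?_⟩
  push Not at hempty
  obtain ⟨I₀, J₀, h₀⟩ := hempty
  have : Nonempty (Fin k) := let ⟨_, φ, _⟩ := h₀; ⟨φ 0⟩
  have hsize : (#T.V1, #T.V2) ∈ Iic τ ×ˢ Iic τ := mem_product.mpr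
    ⟨mem_Iic.mpr ((card_le_card subset_union_left).trans hτ),
      mem_Iic.mpr ((card_le_card subset_union_right).trans hτ)⟩
  obtain ⟨b, hb⟩ := (hhom _ hsize).exists_image_eq r.injective s.injective hrB hsB hrs
  have hrealizes : ∀ I J, #I = #T.V1 → #J = #T.V2 →
      ((P.restrict r s).Realizes T.biadjMatrix I J ↔ b T.biadjMatrix) := fun I J hI hJ => by
    rw [Parade.realizes_restrict_iff]
    exact iff_of_eq (congrFun (hb I J hI hJ) _)
  intro I J
  refine ⟨fun h => h.realizes.card_eq, fun ⟨hI, hJ⟩ => ?_⟩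
  have ⟨hI₀, hJ₀⟩ := h₀.realizes.card_eq
  exact ((hrealizes I J hI hJ).mpr ((hrealizes I₀ J₀ hI₀ hJ₀).mp h₀.realizes)).inTrace
end

section
/- Let K, ℓ, t > 0 be integers and 0 < κ ≤ 1/2. Let r = ⌈t/κ⌉ and L = rℓ. Let P = (A1,…,AK; B1,…,BL) be a parade of width (W1, W2) in a bigraph G. Suppose there do not exist indices 1 < q0 < ⋯ < q_{2t} ≤ L and a set X ⊆ A1 ∪ ⋯ ∪ AK such that X 2κ-covers B_{q_t} and X κ-misses B_{q_j} for all j ∈ {0,…,2t} \ {t}. For 1 ≤ j ≤ ℓ let C_j be the union of the B_i with r(j−1) < i ≤ rj. Then the parade (A1,…,AK; C1,…,C_ℓ) is 2κ-bottom-concave. -/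
/-- The `j`-th grouped block `C_j`: the union of the `B_i` with `r(j−1) < i ≤ rj`
(0-indexed: `r·j ≤ i < r·(j+1)`). -/
def Cblk {G : Bigraph} {K r ℓ : ℕ} (P : Parade G K (r * ℓ)) (j : Fin ℓ) : Finset ℕ :=
  (Finset.range r).attach.biUnion fun i =>
    P.B ⟨r * j.val + i.val, by
      have hi : i.val < r := Finset.mem_range.mp i.property
      have hj : j.val + 1 ≤ ℓ := j.isLt
      calc r * j.val + i.val < r * j.val + r := Nat.add_lt_add_left hi _
        _ = r * (j.val + 1) := by ring
        _ ≤ r * ℓ := Nat.mul_le_mul_left r hj⟩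

/-!
Each `C_j` is the disjoint union of `r = ⌈t/κ⌉₊` blocks `B_i` of a common size `b`. If `X`
`2κ`-covers `C_{h₂}`, averaging over its blocks gives one block `B_p` that `X` `2κ`-covers. If `X`
`2κ`-misses `C_h`, then more than `κr ≥ t` of the blocks of `C_h` are `κ`-missed, since a block
that is not `κ`-missed contributes fewer than `κb` missed vertices. So `t` missed blocks of
`C_{h₁}` other than `B_0`, then `B_p`, then `t` missed blocks of `C_{h₃}` form the configuration
excluded by the hypothesis.
-/

open Finset

theorem le_mul_natCeil_div {x κ : ℝ} (hκ : 0 < κ) : x ≤ κ * ⌈x / κ⌉₊ :=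
  (div_le_iff₀' hκ).1 (Nat.le_ceil _)

theorem card_filter_biUnion_of_pairwiseDisjoint {ι α : Type*} [DecidableEq α] {s : Finset ι}
    {B : ι → Finset α} (hB : (s : Set ι).PairwiseDisjoint B) (p : α → Prop) [DecidablePred p] :
    #((s.biUnion B).filter p) = ∑ i ∈ s, #((B i).filter p) := by
  rw [filter_biUnion, card_biUnion (hB.mono fun i => filter_subset p (B i))]

theorem exists_strictMono_fin_around {α : Type*} [LinearOrder α] {U V : Finset α} {p : α}
    {t : ℕ} (hU : t ≤ #U) (hV : t ≤ #V) (hUp : ∀ u ∈ U, u < p) (hpV : ∀ v ∈ V, p < v) :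
    ∃ q : Fin (2 * t + 1) → α, StrictMono q ∧ q ⟨t, by omega⟩ = p ∧
      ∀ j : Fin (2 * t + 1), j.val ≠ t → q j ∈ U ∪ V := by
  set e := U.orderEmbOfCardLe hU
  set f := V.orderEmbOfCardLe hV
  have he : ∀ i, e i ∈ U := U.orderEmbOfCardLe_mem hU
  have hf : ∀ i, f i ∈ V := V.orderEmbOfCardLe_mem hV
  refine ⟨fun j => if h : j.val < t then e ⟨j, h⟩ else if _ : j.val = t then p
    else f ⟨j - (t + 1), by have := j.isLt; omega⟩, ?_, by simp, fun j hj => ?_⟩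
  · intro a b hab
    have hab' : a.val < b.val := hab
    dsimp only
    split_ifs <;> first
      | omega
      | exact e.strictMono (Fin.mk_lt_mk.2 hab')
      | exact f.strictMono (Fin.mk_lt_mk.2 (by omega))
      | exact hUp _ (he _)
      | exact hpV _ (hf _)
      | exact (hUp _ (he _)).trans (hpV _ (hf _))
  · dsimp only
    split_ifs
    · exact mem_union_left _ (he _)
    · exact mem_union_right _ (hf _)

section BlockUnion

variable {G : Bigraph} {X : Finset ℕ} {ι : Type*} {s : Finset ι} {B : ι → Finset ℕ}

theorem Covers.exists_of_biUnion {lam : ℝ} (hs : s.Nonempty)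
    (hB : (s : Set ι).PairwiseDisjoint B) (h : Covers G lam X (s.biUnion B)) :
    ∃ i ∈ s, Covers G lam X (B i) := by
  unfold Covers at h ⊢
  rw [card_biUnion hB, card_filter_biUnion_of_pairwiseDisjoint hB] at h
  push_cast at h
  rw [mul_sum] at h
  exact exists_le_of_sum_le hs h

theorem Misses.exists_many_of_biUnion {κ : ℝ} (hκ : 0 < κ) (hs : s.Nonempty)
    (hB : (s : Set ι).PairwiseDisjoint B) {b : ℕ} (hb : 0 < b) (hcard : ∀ i ∈ s, #(B i) = b)
    (h : Misses G (2 * κ) X (s.biUnion B)) :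
    ∃ S ⊆ s, (∀ i ∈ S, Misses G κ X (B i)) ∧ κ * #s < #S := by
  classical
  set missed : ι → ℝ := fun i => #((B i).filter fun y => ∀ x ∈ X, ¬ G.adjS x y = true)
  set S := s.filter fun i => Misses G κ X (B i)
  set N := s.filter fun i => ¬ Misses G κ X (B i)
  refine ⟨S, filter_subset _ _, fun i hi => (mem_filter.1 hi).2, ?_⟩
  have hsum : 2 * κ * (#s * b) ≤ ∑ i ∈ S, missed i + ∑ i ∈ N, missed i := by
    rw [sum_filter_add_sum_filter_not]
    unfold Misses at h
    rw [card_biUnion hB, card_filter_biUnion_of_pairwiseDisjoint hB, sum_congr rfl hcard,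
      sum_const, smul_eq_mul] at h
    simp only [missed]
    exact_mod_cast h
  have hS : ∑ i ∈ S, missed i ≤ #S * b := by
    rw [← nsmul_eq_mul]
    refine sum_le_card_nsmul _ _ _ fun i hi => ?_
    rw [← hcard i (filter_subset _ _ hi)]
    simp only [missed]
    exact_mod_cast card_filter_le _ _
  have hN : ∑ i ∈ N, missed i ≤ #N * (κ * b) := by
    rw [← nsmul_eq_mul]
    refine sum_le_card_nsmul _ _ _ fun i hi => ?_
    obtain ⟨his, hnot⟩ := mem_filter.1 hi
    unfold Misses at hnot
    rw [hcard i his] at hnot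
    exact (not_le.1 hnot).le
  have hN_card : (#N : ℝ) = #s - #S := by
    rw [eq_sub_iff_add_eq']
    exact_mod_cast card_filter_add_card_filter_not _
  have hs_pos : (0 : ℝ) < #s := by exact_mod_cast hs.card_pos
  have key : κ * #s ≤ (1 - κ) * #S := by
    refine le_of_mul_le_mul_right ?_ (Nat.cast_pos.2 hb : (0 : ℝ) < b)
    rw [hN_card] at hN
    linarith
  have hS_pos : 0 < #S := by
    rw [pos_iff_ne_zero]
    intro h0
    rw [h0, Nat.cast_zero, mul_zero] at key
    linarith [mul_pos hκ hs_pos]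
  nlinarith [mul_pos hκ (Nat.cast_pos.2 hS_pos : (0 : ℝ) < #S)]

end BlockUnion

theorem Parade.pairwiseDisjoint_B {G : Bigraph} {K L : ℕ} (P : Parade G K L) (s : Set (Fin L)) :
    s.PairwiseDisjoint P.B :=
  fun i _ j _ hij => P.B_disj i j hij

def cblkIdx (r : ℕ) {ℓ : ℕ} (j : Fin ℓ) : Finset (Fin (r * ℓ)) :=
  univ.map <| (Fin.natAddEmb (r * j)).trans <|
    Fin.castLEEmb (by rw [← Nat.mul_succ]; exact Nat.mul_le_mul_left r j.isLt)

section Cblk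

variable {r ℓ : ℕ}

theorem mem_cblkIdx {j : Fin ℓ} {i : Fin (r * ℓ)} :
    i ∈ cblkIdx r j ↔ r * j ≤ i ∧ i < r * j + r := by
  simp only [cblkIdx, mem_map, mem_univ, true_and]
  constructor
  · rintro ⟨a, rfl⟩
    simp
  · rintro ⟨h1, h2⟩
    exact ⟨⟨i - r * j, by omega⟩, Fin.ext (show r * j + (i - r * j) = i by omega)⟩

theorem card_cblkIdx (j : Fin ℓ) : #(cblkIdx r j) = r := by
  simp [cblkIdx]

theorem cblkIdx_nonempty (hr : 0 < r) (j : Fin ℓ) : (cblkIdx r j).Nonempty :=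
  card_pos.1 (by rwa [card_cblkIdx])

theorem lt_of_mem_cblkIdx {j j' : Fin ℓ} {i i' : Fin (r * ℓ)} (hi : i ∈ cblkIdx r j)
    (hi' : i' ∈ cblkIdx r j') (hj : j < j') : i < i' := by
  rw [mem_cblkIdx] at hi hi'
  have : r * (j + 1) ≤ r * j' := Nat.mul_le_mul_left r hj
  rw [Nat.mul_succ] at this
  exact Fin.lt_def.2 (by omega)

variable {G : Bigraph} {K : ℕ} {P : Parade G K (r * ℓ)} {X : Finset ℕ} {j : Fin ℓ}

theorem Cblk_eq_biUnion (P : Parade G K (r * ℓ)) (j : Fin ℓ) :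
    Cblk P j = (cblkIdx r j).biUnion P.B := by
  ext y
  simp only [Cblk, mem_biUnion, mem_attach, true_and, Subtype.exists, mem_range, cblkIdx,
    mem_map, mem_univ, Function.Embedding.trans_apply, Fin.natAddEmb_apply, Fin.castLEEmb_apply,
    exists_exists_eq_and]
  exact ⟨fun ⟨a, ha, hy⟩ => ⟨⟨a, ha⟩, hy⟩, fun ⟨a, hy⟩ => ⟨a, a.isLt, hy⟩⟩

theorem Covers.exists_of_Cblk {lam : ℝ} (hr : 0 < r) (h : Covers G lam X (Cblk P j)) :
    ∃ p ∈ cblkIdx r j, Covers G lam X (P.B p) := by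
  rw [Cblk_eq_biUnion] at h
  exact h.exists_of_biUnion (cblkIdx_nonempty hr j) (P.pairwiseDisjoint_B _)

theorem Misses.exists_many_of_Cblk {κ : ℝ} (hκ : 0 < κ) (hr : 0 < r)
    (h : Misses G (2 * κ) X (Cblk P j)) :
    ∃ S ⊆ cblkIdx r j, (∀ i ∈ S, Misses G κ X (P.B i)) ∧ κ * r < #S := by
  rw [Cblk_eq_biUnion] at h
  obtain ⟨i, -⟩ := cblkIdx_nonempty hr j
  simpa only [card_cblkIdx] using h.exists_many_of_biUnion hκ (cblkIdx_nonempty hr j)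
    (P.pairwiseDisjoint_B _) (card_pos.2 (P.B_ne i)) (fun i' _ => P.B_card i' i)

end Cblk

/-- Theorem 5.4 of the paper (first part): under the hypothesis that there is no
set `X` of top-side vertices `2κ`-covering some block `B_{q_t}` while `κ`-missing
`2t` blocks around it, the grouped parade `(A_1,…,A_K; C_1,…,C_ℓ)` is
`2κ`-bottom-concave. -/
theorem stmt10 (G : Bigraph) (K ℓ t r : ℕ) (ht : 0 < t)
    (κ : ℝ) (hκ0 : 0 < κ) (hr : r = ⌈(t : ℝ) / κ⌉₊)
    (P : Parade G K (r * ℓ))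
    (hyp : ¬ ∃ (q : Fin (2 * t + 1) → Fin (r * ℓ)) (X : Finset ℕ),
        StrictMono q ∧ 1 ≤ (q ⟨0, by omega⟩).val ∧
        X ⊆ Finset.univ.biUnion (fun i : Fin K => P.A i) ∧
        Covers G (2 * κ) X (P.B (q ⟨t, by omega⟩)) ∧
        ∀ j : Fin (2 * t + 1), j.val ≠ t → Misses G κ X (P.B (q j))) :
    ∀ X ⊆ Finset.univ.biUnion (fun i : Fin K => P.A i),
      ∀ h1 h2 h3 : Fin ℓ, h1 < h2 → h2 < h3 →
        ¬ (Covers G (2 * κ) X (Cblk P h2) ∧ Misses G (2 * κ) X (Cblk P h1) ∧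
            Misses G (2 * κ) X (Cblk P h3)) := by
  rintro X hX h1 h2 h3 h12 h23 ⟨hcov, hmiss1, hmiss3⟩
  have ht_le : (t : ℝ) ≤ κ * r := hr ▸ le_mul_natCeil_div hκ0
  have hr_pos : 0 < r := Nat.pos_of_ne_zero fun h0 => by simp [h0] at ht_le; omega
  obtain ⟨p, hp, hcov_p⟩ := hcov.exists_of_Cblk hr_pos
  obtain ⟨S1, hS1, hmiss_S1, hcard1⟩ := hmiss1.exists_many_of_Cblk hκ0 hr_pos
  obtain ⟨S3, hS3, hmiss_S3, hcard3⟩ := hmiss3.exists_many_of_Cblk hκ0 hr_pos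
  replace hcard1 : t < #S1 := by exact_mod_cast ht_le.trans_lt hcard1
  replace hcard3 : t < #S3 := by exact_mod_cast ht_le.trans_lt hcard3
  obtain ⟨q, hq, hqt, hqUV⟩ := exists_strictMono_fin_around (U := S1.erase ⟨0, p.pos⟩) (V := S3)
    (by have := pred_card_le_card_erase (s := S1) (a := ⟨0, p.pos⟩); omega) hcard3.le
    (fun u hu => lt_of_mem_cblkIdx (hS1 (mem_of_mem_erase hu)) hp h12)
    (fun v hv => lt_of_mem_cblkIdx hp (hS3 hv) h23)
  refine hyp ⟨q, X, hq, ?_, hX, by rwa [hqt], fun j hj => ?_⟩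
  · rcases mem_union.1 (hqUV ⟨0, by omega⟩ ht.ne) with hU | hV
    · exact Nat.one_le_iff_ne_zero.2 fun h0 => ne_of_mem_erase hU (Fin.ext h0)
    · exact (Nat.zero_le _).trans_lt (lt_of_mem_cblkIdx hp (hS3 hV) h23)
  · rcases mem_union.1 (hqUV j hj) with hU | hV
    · exact hmiss_S1 _ (mem_of_mem_erase hU)
    · exact hmiss_S3 _ hV
end

section
/- Let 0 ≤ λ ≤ 1 and let C1, …, C_m be disjoint finite nonempty vertex sets in a bigraph on the V2 side, all of the same size, and let X be a vertex set on the V1 side. Suppose that for all h1 < h2 < h3 there is no occurrence of X λ-covering C_{h2} while λ-missing C_{h1} and C_{h3} (concavity), and suppose X λ-covers each of C1, …, C_m, where λ ≤ 1/2. Then the set of indices j such that X λ-misses C_j (the 'pits' of X) has cardinality at most 2, and if it has cardinality 2 then the two pits are consecutive integers. -/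
namespace Fin

variable {m : ℕ} {p : Fin m → Prop}

theorem val_eq_add_one_of_no_gap (hgap : ∀ i j k : Fin m, i < j → j < k → ¬ (p i ∧ p k))
    {i j : Fin m} (hi : p i) (hj : p j) (hij : i < j) : (j : ℕ) = i + 1 := by
  by_contra hne
  have hlt : (i : ℕ) + 1 < j := by omega
  exact hgap i ⟨i + 1, hlt.trans j.isLt⟩ j (Fin.lt_def.2 (Nat.lt_succ_self _)) (Fin.lt_def.2 hlt)
    ⟨hi, hj⟩

theorem card_subtype_le_two_of_consecutive
    (hcons : ∀ i j : Fin m, p i → p j → i < j → (j : ℕ) = i + 1) :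
    Nat.card {j // p j} ≤ 2 := by
  classical
  rw [Nat.card_eq_fintype_card, Fintype.card_subtype]
  by_contra! hthree
  obtain ⟨a, ha, b, hb, c, hc, hab, hac, hbc⟩ := Finset.two_lt_card.mp hthree
  simp only [Finset.mem_filter, Finset.mem_univ, true_and] at ha hb hc
  have := hcons a b ha hb; have := hcons b a hb ha
  have := hcons a c ha hc; have := hcons c a hc ha
  have := hcons b c hb hc; have := hcons c b hc hb
  omega

end Fin

theorem stmt11_general (G : Bigraph) (m : ℕ) (lam : ℝ)
    (C : Fin m → Finset ℕ) (X : Finset ℕ)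
    (hconc : ∀ h1 h2 h3 : Fin m, h1 < h2 → h2 < h3 →
        ¬ (Covers G lam X (C h2) ∧ Misses G lam X (C h1) ∧ Misses G lam X (C h3)))
    (hcov : ∀ j, Covers G lam X (C j)) :
    Nat.card {j : Fin m // Misses G lam X (C j)} ≤ 2 ∧
      ∀ j1 j2 : Fin m, Misses G lam X (C j1) → Misses G lam X (C j2) → j1 < j2 →
        (j2 : ℕ) = (j1 : ℕ) + 1 := by
  have consecutive : ∀ j1 j2 : Fin m, Misses G lam X (C j1) → Misses G lam X (C j2) →
      j1 < j2 → (j2 : ℕ) = (j1 : ℕ) + 1 := fun _ _ =>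
    Fin.val_eq_add_one_of_no_gap fun h1 h2 h3 h12 h23 hpits =>
      hconc h1 h2 h3 h12 h23 ⟨hcov h2, hpits⟩
  exact ⟨Fin.card_subtype_le_two_of_consecutive consecutive, consecutive⟩

/-- If `X` `λ`-covers every block `C_j` and the concavity condition holds, then `X`
has at most two pits, and if there are two pits they are consecutive. -/
theorem stmt11 (G : Bigraph) (m : ℕ) (lam : ℝ) (hlam0 : 0 ≤ lam) (hlam : lam ≤ 1 / 2)
    (C : Fin m → Finset ℕ) (X : Finset ℕ) (hX : X ⊆ G.V1) (hC : ∀ j, C j ⊆ G.V2)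
    (hne : ∀ j, (C j).Nonempty) (hcard : ∀ j j', (C j).card = (C j').card)
    (hdisj : ∀ j j', j ≠ j' → Disjoint (C j) (C j'))
    (hconc : ∀ h1 h2 h3 : Fin m, h1 < h2 → h2 < h3 →
        ¬ (Covers G lam X (C h2) ∧ Misses G lam X (C h1) ∧ Misses G lam X (C h3)))
    (hcov : ∀ j, Covers G lam X (C j)) :
    Nat.card {j : Fin m // Misses G lam X (C j)} ≤ 2 ∧
      ∀ j1 j2 : Fin m, Misses G lam X (C j1) → Misses G lam X (C j2) → j1 < j2 →
        (j2 : ℕ) = (j1 : ℕ) + 1 :=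
  stmt11_general G m lam C X hconc hcov
end

section
/- Let X be a finite index set (the set C of tree-indices), and let A1, AK, B1, BK be finite sets of vertices, and suppose each vertex v in a set F meets (is adjacent to a vertex of) at least one of the structures H_i (i ∈ X), and for each v the number of i ∈ X such that v meets H_i internally is less than 1/8 of the number of i ∈ X such that v meets H_i. Then there exists a linear order of X such that in each of the four sets A1 ∩ F, AK ∩ F, B1 ∩ F, BK ∩ F, at least half the vertices v are 'happy', i.e., v meets H_i properly where i is the first element of X (in the order) such that v meets H_i. -/
/-!
Under a uniformly random order of the indices, the first index a vertex meets is uniformly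
distributed among the indices it meets (a transposition exchanges any two of them), so a vertex
of `F` is unhappy with probability less than `1/8`. By Markov's inequality each of the four sets
has fewer than half of its vertices happy with probability less than `1/4`, and a union bound
over the four sets leaves an order that works for all of them.
-/

open scoped Classical

open Finset Equiv

section IsFirstIn

variable {ι : Type*} [LinearOrder ι]

/-- A permutation `σ` stands for the linear order `i < j ↔ σ i < σ j` on `ι`. -/
def IsFirstIn (σ : Perm ι) (s : Finset ι) (i : ι) : Prop :=
  i ∈ s ∧ ∀ j ∈ s, σ i ≤ σ j

theorem IsFirstIn.eq {σ : Perm ι} {s : Finset ι} {i j : ι} (hi : IsFirstIn σ s i)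
    (hj : IsFirstIn σ s j) : i = j :=
  σ.injective (le_antisymm (hi.2 j hj.1) (hj.2 i hi.1))

theorem exists_isFirstIn (σ : Perm ι) {s : Finset ι} (hs : s.Nonempty) :
    ∃ i, IsFirstIn σ s i :=
  s.exists_min_image σ hs

theorem IsFirstIn.mul_swap {σ : Perm ι} {s : Finset ι} {i j : ι} (h : IsFirstIn σ s i)
    (hj : j ∈ s) : IsFirstIn (σ * swap i j) s j := by
  refine ⟨hj, fun k hk => ?_⟩
  rw [Perm.mul_apply, Perm.mul_apply, swap_apply_right]
  refine h.2 _ ?_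
  rw [swap_apply_def]
  split_ifs
  exacts [hj, h.1, hk]

theorem not_exists_isFirstIn_notMem_iff {σ : Perm ι} {s : Finset ι} (t : Finset ι)
    (hs : s.Nonempty) : (¬ ∃ i, IsFirstIn σ s i ∧ i ∉ t) ↔ ∃ i ∈ t, IsFirstIn σ s i := by
  obtain ⟨i, hi⟩ := exists_isFirstIn σ hs
  constructor
  · intro h
    exact ⟨i, not_not.1 fun hit => h ⟨i, hi, hit⟩, hi⟩
  · rintro ⟨j, hjt, hj⟩ ⟨k, hk, hkt⟩
    exact hkt (hj.eq hk ▸ hjt)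

variable [Fintype ι]

theorem card_isFirstIn_eq {s : Finset ι} {i j : ι} (hi : i ∈ s) (hj : j ∈ s) :
    #{σ : Perm ι | IsFirstIn σ s i} = #{σ : Perm ι | IsFirstIn σ s j} :=
  card_nbij' (· * swap i j) (· * swap i j)
    (fun σ hσ => by simpa using (mem_filter.1 hσ).2.mul_swap hj)
    (fun σ hσ => by simpa [swap_comm] using (mem_filter.1 hσ).2.mul_swap hi)
    (fun σ _ => by simp [mul_assoc])
    (fun σ _ => by simp [mul_assoc])

theorem card_exists_isFirstIn_mul_card {s t : Finset ι} (hs : s.Nonempty) (hts : t ⊆ s) :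
    #{σ : Perm ι | ∃ i ∈ t, IsFirstIn σ s i} * #s = #t * Fintype.card (Perm ι) := by
  obtain ⟨i₀, hi₀⟩ := hs
  have hcount : ∀ u ⊆ s, #{σ : Perm ι | ∃ i ∈ u, IsFirstIn σ s i}
      = #u * #{σ : Perm ι | IsFirstIn σ s i₀} := by
    intro u hu
    have hbiUnion : ({σ : Perm ι | ∃ i ∈ u, IsFirstIn σ s i} : Finset (Perm ι))
        = u.biUnion fun i => {σ : Perm ι | IsFirstIn σ s i} := by
      ext σ
      simp
    rw [hbiUnion, card_biUnion, sum_const_nat fun i hi => card_isFirstIn_eq (hu hi) hi₀]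
    intro i _ j _ hij
    exact disjoint_left.2 fun σ hσi hσj => hij ((mem_filter.1 hσi).2.eq (mem_filter.1 hσj).2)
  have hall : ({σ : Perm ι | ∃ i ∈ s, IsFirstIn σ s i} : Finset (Perm ι)) = univ :=
    filter_true_of_mem fun σ _ => (exists_isFirstIn σ ⟨i₀, hi₀⟩).imp fun i hi => ⟨hi.1, hi⟩
  have htotal : Fintype.card (Perm ι) = #s * #{σ : Perm ι | IsFirstIn σ s i₀} := by
    rw [← card_univ, ← hcount s subset_rfl, hall]
  rw [hcount t hts, htotal]
  ring

theorem mul_card_not_meets_first_properly_lt {V : Type*} (meets internal : V → ι → Prop)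
    (hmi : ∀ v i, internal v i → meets v i) {v : V} (hv : ∃ i, meets v i) {k : ℕ}
    (hfrac : k * #{i | internal v i} < #{i | meets v i}) :
    k * #{σ : Perm ι | ¬ ∃ i, meets v i ∧ ¬ internal v i ∧ ∀ i', meets v i' → σ i ≤ σ i'}
      < Fintype.card (Perm ι) := by
  set s : Finset ι := {i | meets v i}
  set t : Finset ι := {i | internal v i}
  have hs : s.Nonempty := by simpa [s, Finset.Nonempty] using hv
  have hunhappy : #{σ : Perm ι | ¬ ∃ i, meets v i ∧ ¬ internal v i ∧
      ∀ i', meets v i' → σ i ≤ σ i'} = #{σ : Perm ι | ∃ i ∈ t, IsFirstIn σ s i} := by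
    congr 1
    ext σ
    rw [mem_filter, mem_filter, ← not_exists_isFirstIn_notMem_iff t hs]
    simp only [IsFirstIn, s, t, mem_filter, mem_univ, true_and]
    exact not_congr (exists_congr fun i => by tauto)
  have hts : t ⊆ s := fun i hi => by
    simp only [s, t, mem_filter, mem_univ, true_and] at hi ⊢
    exact hmi v i hi
  have hcard := card_exists_isFirstIn_mul_card (ι := ι) hs hts
  rw [hunhappy]
  refine Nat.lt_of_mul_lt_mul_right (a := #s) ?_
  calc k * #{σ : Perm ι | ∃ i ∈ t, IsFirstIn σ s i} * #s
      = k * #t * Fintype.card (Perm ι) := by rw [mul_assoc, hcard, mul_assoc]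
    _ < #s * Fintype.card (Perm ι) := by gcongr
    _ = Fintype.card (Perm ι) * #s := mul_comm _ _

end IsFirstIn

section Averaging

variable {Ω : Type*} [Fintype Ω] [Nonempty Ω]

/-- Markov's inequality, in counting form. -/
theorem mul_card_two_mul_card_filter_lt_lt {V : Type*} (S : Finset V) (P : Ω → V → Prop)
    [∀ ω v, Decidable (P ω v)] (k : ℕ) (h : ∀ v ∈ S, 2 * k * #{ω | ¬ P ω v} ≤ Fintype.card Ω) :
    k * #{ω | 2 * #{v ∈ S | P ω v} < #S} < Fintype.card Ω := by
  set bad : Finset Ω := {ω | 2 * #{v ∈ S | P ω v} < #S}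
  have hbad : ∀ ω ∈ bad, #S + 1 ≤ 2 * #{v ∈ S | ¬ P ω v} := by
    intro ω hω
    have := card_filter_add_card_filter_not (s := S) (fun v => P ω v)
    have := (mem_filter.1 hω).2
    omega
  have hdouble : ∑ ω, #{v ∈ S | ¬ P ω v} = ∑ v ∈ S, #{ω | ¬ P ω v} := by
    simp only [card_filter]
    exact sum_comm
  refine Nat.lt_of_mul_lt_mul_right (a := #S + 1) ?_
  calc k * #bad * (#S + 1)
      ≤ k * ∑ ω ∈ bad, 2 * #{v ∈ S | ¬ P ω v} := by
        rw [mul_assoc]; gcongr; simpa [mul_comm] using card_nsmul_le_sum bad _ _ hbad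
    _ ≤ k * ∑ ω, 2 * #{v ∈ S | ¬ P ω v} := by gcongr; exact subset_univ _
    _ = ∑ v ∈ S, 2 * k * #{ω | ¬ P ω v} := by
        simp only [← mul_sum, hdouble]
        ring
    _ ≤ #S * Fintype.card Ω := by simpa using sum_le_card_nsmul S _ _ h
    _ < Fintype.card Ω * (#S + 1) := by have := Fintype.card_pos (α := Ω); nlinarith

theorem exists_forall_notMem_of_card_mul_card_lt {α : Type*} (T : Finset α) (B : α → Finset Ω)
    (h : ∀ a ∈ T, #T * #(B a) < Fintype.card Ω) : ∃ ω, ∀ a ∈ T, ω ∉ B a := by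
  rcases T.eq_empty_or_nonempty with rfl | hT
  · simp
  have hsum : ∑ a ∈ T, #(B a) < Fintype.card Ω := by
    refine Nat.lt_of_mul_lt_mul_left (a := #T) ?_
    calc #T * ∑ a ∈ T, #(B a) = ∑ a ∈ T, #T * #(B a) := mul_sum _ _ _
      _ < ∑ _a ∈ T, Fintype.card Ω := sum_lt_sum_of_nonempty hT h
      _ = #T * Fintype.card Ω := by rw [sum_const, smul_eq_mul]
  obtain ⟨ω, hω⟩ : ∃ ω, ω ∉ T.biUnion B := by
    by_contra! hcover
    have : univ ⊆ T.biUnion B := fun ω _ => hcover ω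
    exact (card_le_card this).trans card_biUnion_le |>.not_gt (card_univ (α := Ω) ▸ hsum)
  exact ⟨ω, fun a ha hωa => hω (mem_biUnion.2 ⟨a, ha, hωa⟩)⟩

end Averaging

/-- Step (5) of the proof of Theorem 3.1: if every vertex `v` of `F` meets some
structure `H_i` (`i : Fin n`), and for each `v` fewer than `1/8` of the indices it
meets are met internally, then there is a linear order (a permutation `σ` of
`Fin n`) such that in each of the four sets `A1 ∩ F, AK ∩ F, B1 ∩ F, BK ∩ F`,
at least half the vertices are happy: they meet properly (meet but not
internally) the first structure, in the order, that they meet. -/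
theorem stmt15 (n : ℕ) (A1 AK B1 BK F : Finset ℕ)
    (meets internal : ℕ → Fin n → Prop)
    (hmi : ∀ v i, internal v i → meets v i)
    (hmeet : ∀ v ∈ F, ∃ i, meets v i)
    (hfrac : ∀ v ∈ F,
      8 * (Finset.univ.filter fun i => internal v i).card <
        (Finset.univ.filter fun i => meets v i).card) :
    ∃ σ : Equiv.Perm (Fin n),
      ∀ S ∈ [A1 ∩ F, AK ∩ F, B1 ∩ F, BK ∩ F],
        S.card ≤ 2 * (S.filter fun v => ∃ i, meets v i ∧ ¬ internal v i ∧
          ∀ i', meets v i' → σ i ≤ σ i').card := by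
  set sets := [A1 ∩ F, AK ∩ F, B1 ∩ F, BK ∩ F].toFinset
  set unhappyOn : Finset ℕ → Finset (Perm (Fin n)) := fun S =>
    {σ | 2 * #{v ∈ S | ∃ i, meets v i ∧ ¬ internal v i ∧ ∀ i', meets v i' → σ i ≤ σ i'} < #S}
  have hquarter : ∀ S ⊆ F, 4 * #(unhappyOn S) < Fintype.card (Perm (Fin n)) :=
    fun S hS => mul_card_two_mul_card_filter_lt_lt S _ 4 fun v hv => by
      -- `convert` reconciles the decidability instances of the two filters
      convert Nat.le_of_lt (mul_card_not_meets_first_properly_lt (k := 2 * 4) meets internal hmi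
        (hmeet v (hS hv)) (hfrac v (hS hv)))
  obtain ⟨σ, hσ⟩ := exists_forall_notMem_of_card_mul_card_lt sets unhappyOn fun S hS => by
    have hsets : #sets ≤ 4 := List.toFinset_card_le _
    have hSF : S ⊆ F := by
      simp only [sets, List.mem_toFinset, List.mem_cons, List.not_mem_nil, or_false] at hS
      rcases hS with rfl | rfl | rfl | rfl <;> exact inter_subset_right
    exact (Nat.mul_le_mul_right _ hsets).trans_lt (hquarter S hSF)
  exact ⟨σ, fun S hS => by simpa [unhappyOn] using hσ S (List.mem_toFinset.2 hS)⟩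
end
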